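/- arXiv:1301.4969 — 6 statements merged into one kernel-verified Lean document; each statement's English description precedes it below -/
import Mathlib

section
/- If A and B are n×n diagonally symmetrizable irreducible nonnegative matrices that commute, then they can be simultaneously decomposed as A = D_v^{1/2} D_u^{-1/2} K Λ_A Kᵀ D_v^{-1/2} D_u^{1/2} and B = D_v^{1/2} D_u^{-1/2} K Λ_B Kᵀ D_v^{-1/2} D_u^{1/2}, where v and u are the common right and left Perron vectors of A and B, K is orthogonal with first column equal to D_v^{1/2} D_u^{1/2} e (e the all-ones vector), and Λ_A, Λ_B are diagonal matrices of the eigenvalues of A and B. -/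
open Matrix Polynomial

noncomputable def specRad {ι : Type*} [Fintype ι] [DecidableEq ι]
    (A : Matrix ι ι ℝ) : ℝ :=
  sSup (abs '' spectrum ℝ A)

def IsIrred {n : ℕ} (A : Matrix (Fin n) (Fin n) ℝ) : Prop :=
  ∀ i j, ∃ t : ℕ, 0 < (A ^ (t + 1)) i j

def Symmetrizable {n : ℕ} (A : Matrix (Fin n) (Fin n) ℝ) : Prop :=
  ∃ (dL dR : Fin n → ℝ) (S : Matrix (Fin n) (Fin n) ℝ),
    (∀ i, 0 < dL i) ∧ (∀ i, 0 < dR i) ∧ S.IsSymm ∧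
      A = Matrix.diagonal dL * S * Matrix.diagonal dR

/-!
A positive diagonal similarity `D⁻¹ A D` turns a symmetrizable matrix into a symmetric one, which
reduces Perron–Frobenius to the symmetric case. There the Rayleigh quotient shows that `|z|` is a
top eigenvector whenever `z` is, and irreducibility makes every nonzero nonnegative top
eigenvector positive; hence the largest eigenvalue is the spectral radius and its eigenspace is
spanned by a positive vector. Since `A` and `B` commute, `B` preserves the Perron eigenspace of
`A`, so `A` and `B` share their Perron vectors `u` and `v`.

If `A * diagonal e` is symmetric, then `e * u` is a right Perron vector of `A`, so `v / u` is a
multiple of `e`. Hence `g = √(v / u)` symmetrizes `A` and `B` simultaneously, giving commuting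
symmetric matrices `M` and `N`. For all but finitely many `τ`, Lagrange interpolation writes `M`
and `N` as polynomials in `M + τ N`, so an orthonormal eigenbasis of `M + τ N` diagonalizes both;
as the Perron eigenvalue of `M` is simple, one of its vectors is `±√(u v)`.
-/

theorem exists_injOn_add_mul (S : Finset (ℝ × ℝ)) :
    ∃ τ : ℝ, Set.InjOn (fun q : ℝ × ℝ => q.1 + τ * q.2) S := by
  obtain ⟨τ, hτ⟩ := Infinite.exists_notMem_finset
    ((S ×ˢ S).image fun pq : (ℝ × ℝ) × (ℝ × ℝ) => (pq.1.1 - pq.2.1) / (pq.2.2 - pq.1.2))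
  refine ⟨τ, fun p hp q hq hpq => ?_⟩
  simp only at hpq
  by_cases h2 : p.2 = q.2
  · exact Prod.ext (by rw [h2] at hpq; linarith) h2
  · refine absurd (Finset.mem_image.2 ⟨(p, q), Finset.mem_product.2 ⟨hp, hq⟩, ?_⟩) hτ
    have : q.2 - p.2 ≠ 0 := sub_ne_zero.2 (Ne.symm h2)
    field_simp
    linarith

namespace Matrix

variable {ι R : Type*} [Fintype ι] [Field R]

def SpansEigenspace (A : Matrix ι ι R) (ρ : R) (v : ι → R) : Prop :=
  ∀ z, A *ᵥ z = ρ • z → ∃ c : R, z = c • v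

theorem SpansEigenspace.of_ne_zero {A : Matrix ι ι R} {ρ : R} {w v : ι → R}
    (h : SpansEigenspace A ρ w) (hv : A *ᵥ v = ρ • v) (hv0 : v ≠ 0) :
    SpansEigenspace A ρ v := by
  obtain ⟨a, rfl⟩ := h v hv
  have ha : a ≠ 0 := by rintro rfl; simp at hv0
  intro z hz
  obtain ⟨b, rfl⟩ := h z hz
  exact ⟨b / a, by rw [smul_smul, div_mul_cancel₀ b ha]⟩

theorem mulVec_eq_smul_of_commute {A B : Matrix ι ι R} (hAB : Commute A B) {ρ σ : R}
    {u v : ι → R} (hv : A *ᵥ v = ρ • v) (hspan : SpansEigenspace A ρ v)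
    (hu : Bᵀ *ᵥ u = σ • u) (huv : u ⬝ᵥ v ≠ 0) : B *ᵥ v = σ • v := by
  obtain ⟨c, hc⟩ := hspan (B *ᵥ v) <| by
    rw [mulVec_mulVec, hAB.eq, ← mulVec_mulVec, hv, mulVec_smul]
  have : c * (u ⬝ᵥ v) = σ * (u ⬝ᵥ v) := by
    rw [← smul_eq_mul, ← dotProduct_smul, ← hc, dotProduct_mulVec, ← mulVec_transpose, hu,
      smul_dotProduct, smul_eq_mul]
  rw [hc, mul_right_cancel₀ huv this]

theorem abs_dotProduct_abs (x : ι → ℝ) : |x| ⬝ᵥ |x| = x ⬝ᵥ x := by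
  simp [dotProduct, abs_mul_abs_self]

theorem abs_dotProduct_mulVec_le {M : Matrix ι ι ℝ} (h0 : ∀ i j, 0 ≤ M i j) (x : ι → ℝ) :
    |x ⬝ᵥ M *ᵥ x| ≤ |x| ⬝ᵥ M *ᵥ |x| := by
  simp only [dotProduct, mulVec, Finset.mul_sum, Pi.abs_apply]
  refine (Finset.abs_sum_le_sum_abs _ _).trans <| Finset.sum_le_sum fun i _ =>
    (Finset.abs_sum_le_sum_abs _ _).trans <| Finset.sum_le_sum fun j _ => ?_
  rw [abs_mul, abs_mul, abs_of_nonneg (h0 i j)]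

theorem apply_mul_le_mulVec_apply {M : Matrix ι ι ℝ} (h0 : ∀ i j, 0 ≤ M i j) {z : ι → ℝ}
    (hz : 0 ≤ z) (i j : ι) : M i j * z j ≤ (M *ᵥ z) i :=
  Finset.single_le_sum (f := fun k => M i k * z k) (fun k _ => mul_nonneg (h0 i k) (hz k))
    (Finset.mem_univ j)

variable [DecidableEq ι]

theorem mem_spectrum_of_mulVec_eq_smul {A : Matrix ι ι R} {μ : R} {z : ι → R} (hz : z ≠ 0)
    (h : A *ᵥ z = μ • z) : μ ∈ spectrum R A := by
  rw [← spectrum_toLin']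
  exact Module.End.HasEigenvalue.mem_spectrum
    (Module.End.hasEigenvalue_of_hasEigenvector ⟨Module.End.mem_eigenspace_iff.2 h, hz⟩)

theorem pow_mulVec_eq_smul {A : Matrix ι ι R} {μ : R} {z : ι → R} (h : A *ᵥ z = μ • z)
    (k : ℕ) : (A ^ k) *ᵥ z = μ ^ k • z := by
  induction k with
  | zero => simp
  | succ k ih => rw [pow_succ', ← mulVec_mulVec, ih, mulVec_smul, h, smul_smul, pow_succ]

theorem aeval_mulVec_eq_smul {A : Matrix ι ι R} {μ : R} {z : ι → R} (h : A *ᵥ z = μ • z)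
    (p : R[X]) : aeval A p *ᵥ z = p.eval μ • z := by
  induction p using Polynomial.induction_on' with
  | add p q hp hq => simp [add_mulVec, hp, hq, add_smul]
  | monomial k a =>
    simp [aeval_monomial, Algebra.algebraMap_eq_smul_one, smul_mulVec, pow_mulVec_eq_smul h,
      smul_smul]

theorem spectrum_transpose (A : Matrix ι ι R) : spectrum R Aᵀ = spectrum R A := by
  ext μ
  simp only [spectrum.mem_iff, isUnit_iff_isUnit_det]
  rw [← det_transpose, transpose_sub]
  simp [Algebra.algebraMap_eq_smul_one]

theorem spectrum_mul_diagonal_mul_transpose {K : Matrix ι ι R} (hK : Kᵀ * K = 1)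
    (hK' : K * Kᵀ = 1) (d : ι → R) : spectrum R (K * diagonal d * Kᵀ) = Set.range d := by
  let U : (Matrix ι ι R)ˣ := ⟨K, Kᵀ, hK', hK⟩
  rw [show K * diagonal d * Kᵀ = U * diagonal d * ↑U⁻¹ from rfl, spectrum.units_conjugate,
    spectrum_diagonal]

section DiagConj

def diagConj (g : ι → R) (M : Matrix ι ι R) : Matrix ι ι R :=
  diagonal g⁻¹ * M * diagonal g

@[simp]
theorem diagConj_apply (g : ι → R) (M : Matrix ι ι R) (i j : ι) :
    diagConj g M i j = (g i)⁻¹ * M i j * g j := by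
  simp [diagConj, diagonal_mul, mul_diagonal]

def diagonalUnit (g : ι → R) (hg : ∀ i, g i ≠ 0) : (Matrix ι ι R)ˣ where
  val := diagonal g
  inv := diagonal g⁻¹
  val_inv := by simp [diagonal_mul_diagonal, hg]
  inv_val := by simp [diagonal_mul_diagonal, hg]

variable {g : ι → R}

theorem diagConj_eq_units_conj (hg : ∀ i, g i ≠ 0) (M : Matrix ι ι R) :
    diagConj g M = (diagonalUnit g hg)⁻¹.val * M * (diagonalUnit g hg).val :=
  rfl

theorem diagConj_mul (hg : ∀ i, g i ≠ 0) (M N : Matrix ι ι R) :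
    diagConj g (M * N) = diagConj g M * diagConj g N := by
  simp only [diagConj_eq_units_conj hg, mul_assoc, Units.mul_inv_cancel_left]

theorem diagConj_pow (hg : ∀ i, g i ≠ 0) (M : Matrix ι ι R) (k : ℕ) :
    diagConj g M ^ k = diagConj g (M ^ k) := by
  rw [diagConj_eq_units_conj hg, diagConj_eq_units_conj hg, Units.conj_pow']

theorem spectrum_diagConj (hg : ∀ i, g i ≠ 0) (M : Matrix ι ι R) :
    spectrum R (diagConj g M) = spectrum R M := by
  rw [diagConj_eq_units_conj hg, spectrum.units_conjugate']

theorem diagonal_mul_diagConj_mul (hg : ∀ i, g i ≠ 0) (M : Matrix ι ι R) :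
    diagonal g * diagConj g M * diagonal g⁻¹ = M := by
  change (diagonalUnit g hg).val * diagConj g M * (diagonalUnit g hg)⁻¹.val = M
  simp only [diagConj_eq_units_conj hg, mul_assoc, Units.mul_inv_cancel_left, Units.mul_inv,
    mul_one]

theorem diagConj_mulVec_eq_smul_iff (hg : ∀ i, g i ≠ 0) {M : Matrix ι ι R} {ρ : R}
    {x : ι → R} : diagConj g M *ᵥ x = ρ • x ↔ M *ᵥ (g * x) = ρ • (g * x) := by
  have hdiag : ∀ d y : ι → R, diagonal d *ᵥ y = d * y := fun d y => funext (mulVec_diagonal d y)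
  rw [diagConj, ← mulVec_mulVec, ← mulVec_mulVec, hdiag, hdiag, funext_iff, funext_iff]
  refine forall_congr' fun i => ?_
  simp only [Pi.mul_apply, Pi.inv_apply, Pi.smul_apply, smul_eq_mul]
  rw [inv_mul_eq_iff_eq_mul₀ (hg i), mul_left_comm]

theorem spansEigenspace_diagConj_iff (hg : ∀ i, g i ≠ 0) {M : Matrix ι ι R} {ρ : R}
    {w : ι → R} : SpansEigenspace (diagConj g M) ρ w ↔ SpansEigenspace M ρ (g * w) := by
  have hcancel : ∀ z : ι → R, g * (g⁻¹ * z) = z := fun z => by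
    ext i; simp [hg i]
  have hcancel' : ∀ z : ι → R, g⁻¹ * (g * z) = z := fun z => by
    ext i; simp [hg i]
  constructor
  · intro h z hz
    obtain ⟨c, hc⟩ := h (g⁻¹ * z) ((diagConj_mulVec_eq_smul_iff hg).2 (by rwa [hcancel]))
    exact ⟨c, by rw [← hcancel z, hc, mul_smul_comm]⟩
  · intro h z hz
    obtain ⟨c, hc⟩ := h (g * z) ((diagConj_mulVec_eq_smul_iff hg).1 hz)
    exact ⟨c, by rw [← hcancel' z, hc, mul_smul_comm, hcancel']⟩

theorem transpose_eq_diagConj (hg : ∀ i, g i ≠ 0) {M : Matrix ι ι R}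
    (h : (M * diagonal g).IsSymm) : Mᵀ = diagConj g M := by
  have h' : diagonal g * Mᵀ = M * diagonal g := by
    simpa [IsSymm, transpose_mul] using h
  calc Mᵀ = (diagonalUnit g hg)⁻¹.val * ((diagonalUnit g hg).val * Mᵀ) :=
        ((diagonalUnit g hg).inv_mul_cancel_left _).symm
    _ = diagConj g M := by rw [diagConj_eq_units_conj hg, mul_assoc]; exact congrArg _ h'

theorem isSymm_diagConj (hg : ∀ i, g i ≠ 0) {M : Matrix ι ι R}
    (h : (M * diagonal (g * g)).IsSymm) : (diagConj g M).IsSymm := by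
  rw [IsSymm.ext_iff] at h ⊢
  intro i j
  have := h i j
  simp only [mul_diagonal, Pi.mul_apply] at this
  simp only [diagConj_apply]
  field_simp [hg i, hg j]
  linear_combination this

end DiagConj

section Rayleigh

variable {M : Matrix ι ι ℝ} {r : ℝ}

theorem IsHermitian.eigenvectorBasis_dotProduct (hM : M.IsHermitian) (j k : ι) :
    (hM.eigenvectorBasis j).ofLp ⬝ᵥ (hM.eigenvectorBasis k).ofLp = if j = k then 1 else 0 := by
  rw [← orthonormal_iff_ite.mp hM.eigenvectorBasis.orthonormal j k,
    EuclideanSpace.inner_eq_star_dotProduct, star_trivial, dotProduct_comm]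

open scoped MatrixOrder in
theorem IsHermitian.posSemidef_algebraMap_sub (hM : M.IsHermitian)
    (hr : r ∈ upperBounds (spectrum ℝ M)) : (algebraMap ℝ _ r - M).PosSemidef :=
  Matrix.le_iff.mp (le_algebraMap_of_spectrum_le hr hM.isSelfAdjoint)

theorem algebraMap_sub_mulVec (x : ι → ℝ) : (algebraMap ℝ _ r - M) *ᵥ x = r • x - M *ᵥ x := by
  simp [Algebra.algebraMap_eq_smul_one, sub_mulVec, smul_mulVec]

theorem IsHermitian.dotProduct_mulVec_le (hM : M.IsHermitian)
    (hr : r ∈ upperBounds (spectrum ℝ M)) (x : ι → ℝ) : x ⬝ᵥ M *ᵥ x ≤ r * (x ⬝ᵥ x) := by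
  have := (hM.posSemidef_algebraMap_sub hr).re_dotProduct_nonneg x
  simp only [RCLike.re_to_real, star_trivial, algebraMap_sub_mulVec, dotProduct_sub,
    dotProduct_smul, smul_eq_mul] at this
  linarith

theorem IsHermitian.mulVec_eq_smul_of_le (hM : M.IsHermitian)
    (hr : r ∈ upperBounds (spectrum ℝ M)) {x : ι → ℝ} (hx : r * (x ⬝ᵥ x) ≤ x ⬝ᵥ M *ᵥ x) :
    M *ᵥ x = r • x := by
  have hx' : star x ⬝ᵥ (algebraMap ℝ _ r - M) *ᵥ x = 0 := by
    rw [star_trivial, algebraMap_sub_mulVec, dotProduct_sub, dotProduct_smul, smul_eq_mul]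
    linarith [hM.dotProduct_mulVec_le hr x]
  have := ((hM.posSemidef_algebraMap_sub hr).dotProduct_mulVec_zero_iff x).mp hx'
  rwa [algebraMap_sub_mulVec, sub_eq_zero, eq_comm] at this

theorem IsHermitian.mulVec_abs_eq_smul (hM : M.IsHermitian) (h0 : ∀ i j, 0 ≤ M i j)
    (hr : r ∈ upperBounds (spectrum ℝ M)) {z : ι → ℝ} (hz : M *ᵥ z = r • z) :
    M *ᵥ |z| = r • |z| := by
  refine hM.mulVec_eq_smul_of_le hr ?_
  calc r * (|z| ⬝ᵥ |z|) = z ⬝ᵥ M *ᵥ z := by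
        rw [abs_dotProduct_abs, hz, dotProduct_smul, smul_eq_mul]
    _ ≤ |z ⬝ᵥ M *ᵥ z| := le_abs_self _
    _ ≤ |z| ⬝ᵥ M *ᵥ |z| := abs_dotProduct_mulVec_le h0 z

theorem IsHermitian.abs_le_of_mem_spectrum (hM : M.IsHermitian) (h0 : ∀ i j, 0 ≤ M i j)
    (hr : r ∈ upperBounds (spectrum ℝ M)) {μ : ℝ} (hμ : μ ∈ spectrum ℝ M) : |μ| ≤ r := by
  obtain ⟨i, rfl⟩ := hM.spectrum_real_eq_range_eigenvalues ▸ hμ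
  set x := (hM.eigenvectorBasis i).ofLp
  have hx : x ⬝ᵥ x = 1 := by simpa using hM.eigenvectorBasis_dotProduct i i
  calc |hM.eigenvalues i| = |x ⬝ᵥ M *ᵥ x| := by
        rw [hM.mulVec_eigenvectorBasis, dotProduct_smul, hx, smul_eq_mul, mul_one]
    _ ≤ |x| ⬝ᵥ M *ᵥ |x| := abs_dotProduct_mulVec_le h0 x
    _ ≤ r * (|x| ⬝ᵥ |x|) := hM.dotProduct_mulVec_le hr _
    _ = r := by rw [abs_dotProduct_abs, hx, mul_one]

theorem IsHermitian.specRad_eq (hM : M.IsHermitian) (h0 : ∀ i j, 0 ≤ M i j)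
    (hr : IsGreatest (spectrum ℝ M) r) : specRad M = r := by
  have hbound : ∀ μ ∈ spectrum ℝ M, |μ| ≤ r := fun μ => hM.abs_le_of_mem_spectrum h0 hr.2
  refine IsGreatest.csSup_eq ⟨⟨r, hr.1, abs_of_nonneg ((abs_nonneg r).trans (hbound r hr.1))⟩, ?_⟩
  rintro _ ⟨μ, hμ, rfl⟩
  exact hbound μ hμ

theorem IsHermitian.exists_isGreatest_spectrum [Nonempty ι] (hM : M.IsHermitian) :
    ∃ r, IsGreatest (spectrum ℝ M) r :=
  have hne : (spectrum ℝ M).Nonempty :=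
    ⟨_, hM.eigenvalues_mem_spectrum_real (Classical.arbitrary ι)⟩
  ⟨_, hne.csSup_mem M.finite_real_spectrum,
    fun _ hμ => le_csSup M.finite_real_spectrum.bddAbove hμ⟩

end Rayleigh

section Perron

variable {n : ℕ} {M : Matrix (Fin n) (Fin n) ℝ} {r : ℝ}

theorem pos_of_mulVec_eq_smul (h0 : ∀ i j, 0 ≤ M i j) (hirr : IsIrred M) {z : Fin n → ℝ}
    (hz : M *ᵥ z = r • z) (hz0 : 0 ≤ z) (hne : z ≠ 0) (i : Fin n) : 0 < z i := by
  obtain ⟨j, hj⟩ : ∃ j, 0 < z j := by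
    by_contra! h
    exact hne (funext fun i => le_antisymm (h i) (hz0 i))
  have hr : 0 ≤ r := by
    have : 0 ≤ r * z j := by
      simpa [hz] using (mul_nonneg (h0 j j) (hz0 j)).trans (apply_mul_le_mulVec_apply h0 hz0 j j)
    exact nonneg_of_mul_nonneg_left this hj
  obtain ⟨t, ht⟩ := hirr i j
  have : 0 < r ^ (t + 1) * z i := by
    calc 0 < (M ^ (t + 1)) i j * z j := mul_pos ht hj
      _ ≤ ((M ^ (t + 1)) *ᵥ z) i := apply_mul_le_mulVec_apply (pow_apply_nonneg h0 _) hz0 i j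
      _ = r ^ (t + 1) * z i := by rw [pow_mulVec_eq_smul hz]; rfl
  exact pos_of_mul_pos_right this (pow_nonneg hr _)

theorem IsHermitian.spansEigenspace_of_pos [NeZero n] (hM : M.IsHermitian)
    (h0 : ∀ i j, 0 ≤ M i j) (hirr : IsIrred M) (hr : r ∈ upperBounds (spectrum ℝ M))
    {y : Fin n → ℝ} (hy : M *ᵥ y = r • y) (hypos : ∀ i, 0 < y i) : SpansEigenspace M r y := by
  intro z hz
  set c := z 0 / y 0
  have hx : M *ᵥ (z - c • y) = r • (z - c • y) := by
    rw [mulVec_sub, mulVec_smul, hz, hy, smul_sub, smul_comm]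
  have hx0 : (z - c • y) 0 = 0 := by simp [c, (hypos 0).ne']
  refine ⟨c, sub_eq_zero.1 ?_⟩
  -- otherwise `|z - c • y|` would be a nonnegative top eigenvector with a zero entry
  by_contra hne
  have := pos_of_mulVec_eq_smul h0 hirr (hM.mulVec_abs_eq_smul h0 hr hx) (abs_nonneg _)
    (by simpa using hne) 0
  simp [hx0] at this

theorem IsHermitian.exists_perron_vector [NeZero n] (hM : M.IsHermitian) (h0 : ∀ i j, 0 ≤ M i j)
    (hirr : IsIrred M) :
    ∃ w : Fin n → ℝ, (∀ i, 0 < w i) ∧ M *ᵥ w = specRad M • w ∧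
      SpansEigenspace M (specRad M) w := by
  obtain ⟨r, hr⟩ := hM.exists_isGreatest_spectrum
  obtain ⟨i, hi⟩ := hM.spectrum_real_eq_range_eigenvalues ▸ hr.1
  set x := (hM.eigenvectorBasis i).ofLp
  have hx : M *ᵥ |x| = r • |x| := hM.mulVec_abs_eq_smul h0 hr.2 (hi ▸ hM.mulVec_eigenvectorBasis i)
  have hx0 : |x| ≠ 0 := fun h => by
    have := (abs_dotProduct_abs x).trans (hM.eigenvectorBasis_dotProduct i i)
    simp [h] at this
  have hpos := pos_of_mulVec_eq_smul h0 hirr hx (abs_nonneg x) hx0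
  rw [hM.specRad_eq h0 hr]
  exact ⟨|x|, hpos, hx, hM.spansEigenspace_of_pos h0 hirr hr.2 hx hpos⟩

end Perron

section CommonEigenbasis

variable {M N : Matrix ι ι ℝ}

theorem eq_of_mulVec_eq_on_common_eigenvectors (hM : M.IsHermitian) (hN : N.IsHermitian)
    (hMN : Commute M N) {X Y : Matrix ι ι ℝ}
    (h : ∀ (α γ : ℝ) (z : ι → ℝ), M *ᵥ z = α • z → N *ᵥ z = γ • z → X *ᵥ z = Y *ᵥ z) :
    X = Y := by
  have hcomm : Commute (toEuclideanLin M) (toEuclideanLin N) := LinearMap.ext fun x => by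
    show WithLp.toLp 2 (M *ᵥ N *ᵥ x.ofLp) = WithLp.toLp 2 (N *ᵥ M *ᵥ x.ofLp)
    rw [mulVec_mulVec, mulVec_mulVec, hMN.eq]
  have htop := LinearMap.IsSymmetric.iSup_iSup_eigenspace_inf_eigenspace_eq_top_of_commute
    (isSymmetric_toEuclideanLin_iff.2 hM) (isSymmetric_toEuclideanLin_iff.2 hN) hcomm
  refine toEuclideanLin.injective ?_
  rw [← LinearMap.eqLocus_eq_top, eq_top_iff, ← htop]
  refine iSup₂_le fun α γ z hz => ?_
  obtain ⟨hzα, hzγ⟩ := Submodule.mem_inf.1 hz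
  rw [Module.End.mem_eigenspace_iff] at hzα hzγ
  rw [LinearMap.mem_eqLocus]
  show WithLp.toLp 2 (X *ᵥ z.ofLp) = WithLp.toLp 2 (Y *ᵥ z.ofLp)
  congr 1
  exact h α γ z.ofLp (by simpa using congrArg WithLp.ofLp hzα)
    (by simpa using congrArg WithLp.ofLp hzγ)

theorem exists_aeval_eq_of_commute (hM : M.IsHermitian) (hN : N.IsHermitian)
    (hMN : Commute M N) :
    ∃ (τ : ℝ) (p q : ℝ[X]), aeval (M + τ • N) p = M ∧ aeval (M + τ • N) q = N := by
  set S := M.finite_real_spectrum.toFinset ×ˢ N.finite_real_spectrum.toFinset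
  obtain ⟨τ, hτ⟩ := exists_injOn_add_mul S
  have key : ∀ (f : ℝ × ℝ → ℝ) (X : Matrix ι ι ℝ), (∀ (α γ : ℝ) (z : ι → ℝ),
      M *ᵥ z = α • z → N *ᵥ z = γ • z → X *ᵥ z = f (α, γ) • z) →
      aeval (M + τ • N) (Lagrange.interpolate S (fun q => q.1 + τ * q.2) f) = X := by
    intro f X hX
    refine eq_of_mulVec_eq_on_common_eigenvectors hM hN hMN fun α γ z hα hγ => ?_
    by_cases hz : z = 0
    · simp [hz]
    have hmem : (α, γ) ∈ S := by
      simp [S, mem_spectrum_of_mulVec_eq_smul hz hα, mem_spectrum_of_mulVec_eq_smul hz hγ]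
    have hC : (M + τ • N) *ᵥ z = (α + τ * γ) • z := by
      rw [add_mulVec, smul_mulVec, hα, hγ, smul_smul, add_smul]
    rw [aeval_mulVec_eq_smul hC, Lagrange.eval_interpolate_at_node f hτ hmem, hX α γ z hα hγ]
  exact ⟨τ, _, _, key Prod.fst M fun _ _ _ hα _ => hα, key Prod.snd N fun _ _ _ _ hγ => hγ⟩

theorem exists_orthonormal_common_eigenvectors (hM : M.IsHermitian) (hN : N.IsHermitian)
    (hMN : Commute M N) :
    ∃ (b : ι → ι → ℝ) (dM dN : ι → ℝ), (∀ j k, b j ⬝ᵥ b k = if j = k then 1 else 0) ∧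
      (∀ j, M *ᵥ b j = dM j • b j) ∧ (∀ j, N *ᵥ b j = dN j • b j) := by
  obtain ⟨τ, p, q, hp, hq⟩ := exists_aeval_eq_of_commute hM hN hMN
  have hC : (M + τ • N).IsHermitian := hM.add (hN.smul (IsSelfAdjoint.all τ))
  refine ⟨fun j => (hC.eigenvectorBasis j).ofLp, fun j => p.eval (hC.eigenvalues j),
    fun j => q.eval (hC.eigenvalues j), hC.eigenvectorBasis_dotProduct, fun j => ?_, fun j => ?_⟩
  · calc M *ᵥ _ = aeval (M + τ • N) p *ᵥ _ := by rw [hp]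
      _ = _ := aeval_mulVec_eq_smul (hC.mulVec_eigenvectorBasis j) p
  · calc N *ᵥ _ = aeval (M + τ • N) q *ᵥ _ := by rw [hq]
      _ = _ := aeval_mulVec_eq_smul (hC.mulVec_eigenvectorBasis j) q

section Orthonormal

variable {b : ι → ι → ℝ}

theorem of_mul_transpose_of_orthonormal (hb : ∀ j k, b j ⬝ᵥ b k = if j = k then 1 else 0) :
    of b * (of b)ᵀ = 1 := by
  ext j k
  rw [mul_apply', one_apply]
  exact hb j k

theorem transpose_mul_of_of_orthonormal (hb : ∀ j k, b j ⬝ᵥ b k = if j = k then 1 else 0) :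
    (of b)ᵀ * of b = 1 :=
  mul_eq_one_comm.1 (of_mul_transpose_of_orthonormal hb)

theorem exists_dotProduct_ne_zero_of_orthonormal
    (hb : ∀ j k, b j ⬝ᵥ b k = if j = k then 1 else 0) {w : ι → ℝ} (hw : w ≠ 0) :
    ∃ j, b j ⬝ᵥ w ≠ 0 := by
  by_contra! h
  apply hw
  rw [← one_mulVec w, ← transpose_mul_of_of_orthonormal hb, ← mulVec_mulVec,
    show of b *ᵥ w = 0 from funext h, mulVec_zero]

theorem eq_transpose_mul_diagonal_mul_of_orthonormal
    (hb : ∀ j k, b j ⬝ᵥ b k = if j = k then 1 else 0) {d : ι → ℝ}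
    (hd : ∀ j, M *ᵥ b j = d j • b j) : M = (of b)ᵀ * diagonal d * of b := by
  have h : M * (of b)ᵀ = (of b)ᵀ * diagonal d := by
    ext i j
    rw [mul_diagonal, mul_apply]
    simpa [mulVec, dotProduct, mul_comm] using congrFun (hd j) i
  rw [← h, mul_assoc, transpose_mul_of_of_orthonormal hb, mul_one]

end Orthonormal

theorem exists_orthogonal_common_diagonalization (hM : M.IsHermitian) (hN : N.IsHermitian)
    (hMN : Commute M N) {w : ι → ℝ} {r : ℝ} (hw : w ⬝ᵥ w = 1) (hMw : M *ᵥ w = r • w)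
    (hspan : SpansEigenspace M r w) (i₀ : ι) :
    ∃ (K : Matrix ι ι ℝ) (dM dN : ι → ℝ), Kᵀ * K = 1 ∧ K * Kᵀ = 1 ∧ (∀ i, K i i₀ = w i) ∧
      M = K * diagonal dM * Kᵀ ∧ N = K * diagonal dN * Kᵀ := by
  obtain ⟨b, dM, dN, hb, hbM, hbN⟩ := exists_orthonormal_common_eigenvectors hM hN hMN
  obtain ⟨j₀, hj₀⟩ := exists_dotProduct_ne_zero_of_orthonormal hb (w := w)
    (fun h => by simp [h] at hw)
  have hdj₀ : dM j₀ = r := by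
    refine mul_right_cancel₀ hj₀ ?_
    calc dM j₀ * (b j₀ ⬝ᵥ w) = (M *ᵥ b j₀) ⬝ᵥ w := by rw [hbM, smul_dotProduct, smul_eq_mul]
      _ = b j₀ ⬝ᵥ M *ᵥ w := by
        rw [dotProduct_mulVec, ← mulVec_transpose, (isHermitian_iff_isSymm.1 hM).eq]
      _ = r * (b j₀ ⬝ᵥ w) := by rw [hMw, dotProduct_smul, smul_eq_mul]
  obtain ⟨c, hc⟩ := hspan (b j₀) (by rw [hbM, hdj₀])
  have hcc : c * c = 1 := by
    simpa [hc, hw] using hb j₀ j₀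
  -- `c = ±1`: move `b j₀` to position `i₀` and multiply the whole family by `c`
  set π := Equiv.swap i₀ j₀
  set b' : ι → ι → ℝ := fun j => c • b (π j)
  have hb' : ∀ j k, b' j ⬝ᵥ b' k = if j = k then 1 else 0 := fun j k => by
    simp only [b', smul_dotProduct, dotProduct_smul, hb, π.injective.eq_iff, smul_eq_mul]
    split_ifs <;> simp [hcc]
  refine ⟨(of b')ᵀ, fun j => dM (π j), fun j => dN (π j), ?_, ?_, fun i => ?_, ?_, ?_⟩
  · rw [transpose_transpose, of_mul_transpose_of_orthonormal hb']
  · rw [transpose_transpose, transpose_mul_of_of_orthonormal hb']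
  · simp [b', π, hc, ← mul_assoc, hcc]
  · rw [transpose_transpose]
    exact eq_transpose_mul_diagonal_mul_of_orthonormal hb' fun j => by
      simp [b', mulVec_smul, hbM, smul_comm c]
  · rw [transpose_transpose]
    exact eq_transpose_mul_diagonal_mul_of_orthonormal hb' fun j => by
      simp [b', mulVec_smul, hbN, smul_comm c]

end CommonEigenbasis

end Matrix

theorem specRad_transpose {ι : Type*} [Fintype ι] [DecidableEq ι] (A : Matrix ι ι ℝ) :
    specRad Aᵀ = specRad A := by
  rw [specRad, specRad, spectrum_transpose]

section Symmetrizable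

variable {n : ℕ}

theorem Symmetrizable.exists_isSymm_mul_diagonal {A : Matrix (Fin n) (Fin n) ℝ}
    (hA : Symmetrizable A) : ∃ e : Fin n → ℝ, (∀ i, 0 < e i) ∧ (A * diagonal e).IsSymm := by
  obtain ⟨dL, dR, S, hL, hR, hS, rfl⟩ := hA
  refine ⟨dL / dR, fun i => div_pos (hL i) (hR i), ?_⟩
  have : diagonal dL * S * diagonal dR * diagonal (dL / dR) = diagonal dL * S * diagonal dL := by
    rw [mul_assoc _ (diagonal dR), diagonal_mul_diagonal]
    congr 2
    ext i
    rw [Pi.div_apply]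
    field_simp [(hR i).ne']
  rw [this, IsSymm, transpose_mul, transpose_mul, diagonal_transpose, hS.eq, mul_assoc]

theorem Symmetrizable.transpose {A : Matrix (Fin n) (Fin n) ℝ} (hA : Symmetrizable A) :
    Symmetrizable Aᵀ := by
  obtain ⟨dL, dR, S, hL, hR, hS, rfl⟩ := hA
  exact ⟨dR, dL, S, hR, hL, hS, by rw [transpose_mul, transpose_mul, diagonal_transpose,
    diagonal_transpose, hS.eq, mul_assoc]⟩

theorem IsIrred.transpose {A : Matrix (Fin n) (Fin n) ℝ} (hA : IsIrred A) : IsIrred Aᵀ :=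
  fun i j => (hA j i).imp fun t ht => by rwa [← transpose_pow]

theorem exists_perron_vector [NeZero n] {A : Matrix (Fin n) (Fin n) ℝ} (h0 : ∀ i j, 0 ≤ A i j)
    (hirr : IsIrred A) (hsym : Symmetrizable A) :
    ∃ v : Fin n → ℝ, (∀ i, 0 < v i) ∧ A *ᵥ v = specRad A • v ∧
      SpansEigenspace A (specRad A) v := by
  obtain ⟨e, he, hAe⟩ := hsym.exists_isSymm_mul_diagonal
  set g : Fin n → ℝ := fun i => √(e i)
  have hg : ∀ i, 0 < g i := fun i => Real.sqrt_pos.2 (he i)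
  have hg' : ∀ i, g i ≠ 0 := fun i => (hg i).ne'
  have hgg : g * g = e := funext fun i => Real.mul_self_sqrt (he i).le
  have hH : (diagConj g A).IsHermitian :=
    isHermitian_iff_isSymm.2 (isSymm_diagConj hg' (hgg ▸ hAe))
  have h0' : ∀ i j, 0 ≤ diagConj g A i j := fun i j => by
    have := hg i; have := hg j; have := h0 i j
    rw [diagConj_apply]; positivity
  have hirr' : IsIrred (diagConj g A) := fun i j => (hirr i j).imp fun t ht => by
    have := hg i; have := hg j
    rw [diagConj_pow hg', diagConj_apply]; positivity
  have hρ : specRad (diagConj g A) = specRad A := by rw [specRad, specRad, spectrum_diagConj hg']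
  obtain ⟨w, hw, hAw, hspan⟩ := hH.exists_perron_vector h0' hirr'
  rw [hρ] at hAw hspan
  exact ⟨g * w, fun i => mul_pos (hg i) (hw i), (diagConj_mulVec_eq_smul_iff hg').1 hAw,
    (spansEigenspace_diagConj_iff hg').1 hspan⟩

theorem spansEigenspace_specRad [NeZero n] {A : Matrix (Fin n) (Fin n) ℝ}
    (h0 : ∀ i j, 0 ≤ A i j) (hirr : IsIrred A) (hsym : Symmetrizable A) {v : Fin n → ℝ}
    (hv : A *ᵥ v = specRad A • v) (hv0 : v ≠ 0) : SpansEigenspace A (specRad A) v :=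
  let ⟨_, _, _, hspan⟩ := exists_perron_vector h0 hirr hsym
  hspan.of_ne_zero hv hv0

theorem exists_smul_normalized {ι : Type*} [Fintype ι] [Nonempty ι] {u₀ v₀ : ι → ℝ}
    (hu₀ : ∀ i, 0 < u₀ i) (hv₀ : ∀ i, 0 < v₀ i) :
    ∃ a b : ℝ, 0 < a ∧ 0 < b ∧ (∑ i, (a • u₀) i * (b • v₀) i) = 1 ∧ (∑ i, (b • v₀) i) = 1 := by
  set s := ∑ i, v₀ i
  set d := u₀ ⬝ᵥ v₀
  have hs : 0 < s := Finset.sum_pos (fun i _ => hv₀ i) Finset.univ_nonempty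
  have hd : 0 < d := Finset.sum_pos (fun i _ => mul_pos (hu₀ i) (hv₀ i)) Finset.univ_nonempty
  refine ⟨s / d, s⁻¹, div_pos hs hd, inv_pos.2 hs, ?_, ?_⟩
  · change ((s / d) • u₀) ⬝ᵥ (s⁻¹ • v₀) = 1
    rw [smul_dotProduct, dotProduct_smul, smul_eq_mul, smul_eq_mul]
    change s / d * (s⁻¹ * d) = 1
    field_simp
  · simp only [Pi.smul_apply, smul_eq_mul, ← Finset.mul_sum]
    exact inv_mul_cancel₀ hs.ne'

theorem exists_common_perron_vectors [NeZero n] {A B : Matrix (Fin n) (Fin n) ℝ}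
    (hA0 : ∀ i j, 0 ≤ A i j) (hB0 : ∀ i j, 0 ≤ B i j) (hAirr : IsIrred A) (hBirr : IsIrred B)
    (hAsym : Symmetrizable A) (hBsym : Symmetrizable B) (hcomm : A * B = B * A) :
    ∃ u v : Fin n → ℝ, (∀ i, 0 < u i) ∧ (∀ i, 0 < v i) ∧
      (∑ i, u i * v i) = 1 ∧ (∑ i, v i) = 1 ∧
      A *ᵥ v = specRad A • v ∧ u ᵥ* A = specRad A • u ∧
      B *ᵥ v = specRad B • v ∧ u ᵥ* B = specRad B • u := by
  have hdot : ∀ x y : Fin n → ℝ, (∀ i, 0 < x i) → (∀ i, 0 < y i) → 0 < x ⬝ᵥ y :=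
    fun x y hx hy => Finset.sum_pos (fun i _ => mul_pos (hx i) (hy i)) Finset.univ_nonempty
  obtain ⟨v₀, hv₀, hAv₀, hAspan⟩ := exists_perron_vector hA0 hAirr hAsym
  obtain ⟨u₀, hu₀, hAu₀, hAspan'⟩ :=
    exists_perron_vector (A := Aᵀ) (fun i j => hA0 j i) hAirr.transpose hAsym.transpose
  obtain ⟨v₁, hv₁, hBv₁, -⟩ := exists_perron_vector hB0 hBirr hBsym
  obtain ⟨u₁, hu₁, hBu₁, -⟩ :=
    exists_perron_vector (A := Bᵀ) (fun i j => hB0 j i) hBirr.transpose hBsym.transpose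
  rw [specRad_transpose] at hAu₀ hAspan' hBu₁
  have hBv₀ : B *ᵥ v₀ = specRad B • v₀ :=
    mulVec_eq_smul_of_commute hcomm hAv₀ hAspan hBu₁ (hdot u₁ v₀ hu₁ hv₀).ne'
  have hBu₀ : Bᵀ *ᵥ u₀ = specRad B • u₀ :=
    mulVec_eq_smul_of_commute (by rw [Commute, SemiconjBy, ← transpose_mul, ← transpose_mul, hcomm])
      hAu₀ hAspan' (by rwa [transpose_transpose]) (hdot v₁ u₀ hv₁ hu₀).ne'
  obtain ⟨a, b, ha, hb, hab, hb1⟩ := exists_smul_normalized hu₀ hv₀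
  refine ⟨a • u₀, b • v₀, fun i => mul_pos ha (hu₀ i), fun i => mul_pos hb (hv₀ i), hab, hb1,
    ?_, ?_, ?_, ?_⟩
  · rw [mulVec_smul, hAv₀, smul_comm]
  · rw [smul_vecMul, ← mulVec_transpose, hAu₀, smul_comm]
  · rw [mulVec_smul, hBv₀, smul_comm]
  · rw [smul_vecMul, ← mulVec_transpose, hBu₀, smul_comm]

theorem isHermitian_diagConj_sqrt_div [NeZero n] {A : Matrix (Fin n) (Fin n) ℝ}
    (h0 : ∀ i j, 0 ≤ A i j) (hirr : IsIrred A) (hsym : Symmetrizable A) {u v : Fin n → ℝ}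
    (hu : ∀ i, 0 < u i) (hv : ∀ i, 0 < v i) (hAv : A *ᵥ v = specRad A • v)
    (huA : u ᵥ* A = specRad A • u) :
    (diagConj (fun i => √(v i) / √(u i)) A).IsHermitian := by
  obtain ⟨e, he, hAe⟩ := hsym.exists_isSymm_mul_diagonal
  have he' : ∀ i, e i ≠ 0 := fun i => (he i).ne'
  have heu : A *ᵥ (e * u) = specRad A • (e * u) := by
    rw [← diagConj_mulVec_eq_smul_iff he', ← transpose_eq_diagConj he' hAe, mulVec_transpose, huA]
  obtain ⟨c, hc⟩ := spansEigenspace_specRad h0 hirr hsym hAv (fun h => (hv 0).ne' (congrFun h 0))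
    _ heu
  have hgg : (fun i => √(v i) / √(u i)) * (fun i => √(v i) / √(u i)) = c⁻¹ • e := by
    ext i
    have hci := congrFun hc i
    simp only [Pi.mul_apply, Pi.smul_apply, smul_eq_mul] at hci ⊢
    have hc0 : c ≠ 0 := by rintro rfl; simp [(he i).ne', (hu i).ne'] at hci
    rw [div_mul_div_comm, Real.mul_self_sqrt (hv i).le, Real.mul_self_sqrt (hu i).le,
      eq_inv_mul_iff_mul_eq₀ hc0, mul_div_assoc', div_eq_iff (hu i).ne']
    linarith
  refine isHermitian_iff_isSymm.2 (isSymm_diagConj (fun i => ?_) ?_)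
  · exact (div_pos (Real.sqrt_pos.2 (hv i)) (Real.sqrt_pos.2 (hu i))).ne'
  · rw [hgg, diagonal_smul, mul_smul_comm]
    exact hAe.smul _

end Symmetrizable

theorem stmt_2 {n : ℕ} (hn : 0 < n) (A B : Matrix (Fin n) (Fin n) ℝ)
    (hA0 : ∀ i j, 0 ≤ A i j) (hB0 : ∀ i j, 0 ≤ B i j)
    (hAirr : IsIrred A) (hBirr : IsIrred B)
    (hAsym : Symmetrizable A) (hBsym : Symmetrizable B)
    (hcomm : A * B = B * A) :
    ∃ (u v : Fin n → ℝ) (K : Matrix (Fin n) (Fin n) ℝ) (lamA lamB : Fin n → ℝ),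
      (∀ i, 0 < u i) ∧ (∀ i, 0 < v i) ∧
      (∑ i, u i * v i) = 1 ∧ (∑ i, v i) = 1 ∧
      A.mulVec v = specRad A • v ∧ Matrix.vecMul u A = specRad A • u ∧
      B.mulVec v = specRad B • v ∧ Matrix.vecMul u B = specRad B • u ∧
      Kᵀ * K = 1 ∧ K * Kᵀ = 1 ∧
      (∀ i, K i ⟨0, hn⟩ = Real.sqrt (v i) * Real.sqrt (u i)) ∧
      (∀ i, lamA i ∈ spectrum ℝ A) ∧ (∀ i, lamB i ∈ spectrum ℝ B) ∧
      A = Matrix.diagonal (fun i => Real.sqrt (v i) / Real.sqrt (u i)) * K *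
            Matrix.diagonal lamA * Kᵀ *
            Matrix.diagonal (fun i => Real.sqrt (u i) / Real.sqrt (v i)) ∧
      B = Matrix.diagonal (fun i => Real.sqrt (v i) / Real.sqrt (u i)) * K *
            Matrix.diagonal lamB * Kᵀ *
            Matrix.diagonal (fun i => Real.sqrt (u i) / Real.sqrt (v i)) := by
  have : NeZero n := ⟨hn.ne'⟩
  obtain ⟨u, v, hu, hv, huv, hv1, hAv, huA, hBv, huB⟩ :=
    exists_common_perron_vectors hA0 hB0 hAirr hBirr hAsym hBsym hcomm
  set g : Fin n → ℝ := fun i => √(v i) / √(u i)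
  set w : Fin n → ℝ := fun i => √(v i) * √(u i)
  have hg : ∀ i, g i ≠ 0 := fun i =>
    (div_pos (Real.sqrt_pos.2 (hv i)) (Real.sqrt_pos.2 (hu i))).ne'
  have hgw : g * w = v := funext fun i => by
    simp only [g, w, Pi.mul_apply]
    field_simp [(Real.sqrt_pos.2 (hu i)).ne']
    exact Real.sq_sqrt (hv i).le
  have hww : w ⬝ᵥ w = 1 := by
    simp only [w, dotProduct, ← huv]
    refine Finset.sum_congr rfl fun i _ => ?_
    rw [mul_mul_mul_comm, Real.mul_self_sqrt (hv i).le, Real.mul_self_sqrt (hu i).le, mul_comm]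
  obtain ⟨K, lamA, lamB, hKK, hKK', hK0, hA', hB'⟩ := exists_orthogonal_common_diagonalization
    (isHermitian_diagConj_sqrt_div hA0 hAirr hAsym hu hv hAv huA)
    (isHermitian_diagConj_sqrt_div hB0 hBirr hBsym hu hv hBv huB)
    (by rw [Commute, SemiconjBy, ← diagConj_mul hg, ← diagConj_mul hg, hcomm]) hww
    ((diagConj_mulVec_eq_smul_iff hg).2 (hgw ▸ hAv))
    ((spansEigenspace_diagConj_iff hg).2 <| hgw ▸
      spansEigenspace_specRad hA0 hAirr hAsym hAv fun h => (hv 0).ne' (congrFun h 0))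
    ⟨0, hn⟩
  have hginv : g⁻¹ = fun i => √(u i) / √(v i) := funext fun i => inv_div _ _
  refine ⟨u, v, K, lamA, lamB, hu, hv, huv, hv1, hAv, huA, hBv, huB, hKK, hKK', hK0,
    fun i => ?_, fun i => ?_, ?_, ?_⟩
  · rw [← spectrum_diagConj hg, hA', spectrum_mul_diagonal_mul_transpose hKK hKK']
    exact ⟨i, rfl⟩
  · rw [← spectrum_diagConj hg, hB', spectrum_mul_diagonal_mul_transpose hKK hKK']
    exact ⟨i, rfl⟩
  · conv_lhs => rw [← diagonal_mul_diagConj_mul hg A, hA', hginv]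
    simp only [g, mul_assoc]
  · conv_lhs => rw [← diagonal_mul_diagConj_mul hg B, hB', hginv]
    simp only [g, mul_assoc]
end

section
/- Let A and B be commuting n×n symmetrizable irreducible nonnegative matrices with Perron roots r_A, r_B and eigenvalues λ_{Ai}, λ_{Bi}. Let D be a positive diagonal matrix and M(m) = A[(1−m) r_B I + m B] for m ∈ [0,1]. Then r(M(m)D) = Σ_{i=1}^n λ_{Ai}[(1−m) r_B + m λ_{Bi}] y_i(m)², where y(m) = ĉ(m)⁻¹ Kᵀ D_v^{-1/2} D_u^{1/2} D v(m), v(m) is the right Perron vector of M(m)D, ĉ(m) = sqrt(v(m)ᵀ D_v⁻¹ D_u D v(m)), and K, u, v come from the simultaneous canonical form of A and B. -/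
open Matrix Polynomial

theorem stmt_3 {n : ℕ} (A B : Matrix (Fin n) (Fin n) ℝ)
    (hA0 : ∀ i j, 0 ≤ A i j) (hB0 : ∀ i j, 0 ≤ B i j)
    (hAirr : IsIrred A) (hBirr : IsIrred B)
    (hAsym : Symmetrizable A) (hBsym : Symmetrizable B)
    (hcomm : A * B = B * A)
    (u v : Fin n → ℝ) (hu : ∀ i, 0 < u i) (hv : ∀ i, 0 < v i)
    (hvP : A.mulVec v = specRad A • v) (huP : Matrix.vecMul u A = specRad A • u)
    (hvPB : B.mulVec v = specRad B • v) (huPB : Matrix.vecMul u B = specRad B • u)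
    (K : Matrix (Fin n) (Fin n) ℝ) (hK : Kᵀ * K = 1) (hK' : K * Kᵀ = 1)
    (lamA lamB : Fin n → ℝ)
    (hAdec : A = Matrix.diagonal (fun i => Real.sqrt (v i) / Real.sqrt (u i)) * K *
            Matrix.diagonal lamA * Kᵀ *
            Matrix.diagonal (fun i => Real.sqrt (u i) / Real.sqrt (v i)))
    (hBdec : B = Matrix.diagonal (fun i => Real.sqrt (v i) / Real.sqrt (u i)) * K *
            Matrix.diagonal lamB * Kᵀ *
            Matrix.diagonal (fun i => Real.sqrt (u i) / Real.sqrt (v i)))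
    (d : Fin n → ℝ) (hd : ∀ i, 0 < d i)
    (vm : ℝ → Fin n → ℝ)
    (hvm : ∀ m ∈ Set.Icc (0:ℝ) 1, (∀ i, 0 < vm m i) ∧
      ((A * (((1 - m) * specRad B) • (1 : Matrix (Fin n) (Fin n) ℝ) + m • B)) *
          Matrix.diagonal d).mulVec (vm m)
        = specRad ((A * (((1 - m) * specRad B) • (1 : Matrix (Fin n) (Fin n) ℝ) + m • B)) *
            Matrix.diagonal d) • vm m) :
    ∀ m ∈ Set.Icc (0:ℝ) 1,
      specRad ((A * (((1 - m) * specRad B) • (1 : Matrix (Fin n) (Fin n) ℝ) + m • B)) *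
          Matrix.diagonal d)
      = ∑ i, lamA i * ((1 - m) * specRad B + m * lamB i) *
          ((∑ j, K j i * d j * Real.sqrt (u j / v j) * vm m j)
            / Real.sqrt (∑ j, d j * (u j / v j) * vm m j ^ 2)) ^ 2 := by
  intro m hm
  obtain ⟨hwpos, heig⟩ := hvm m hm
  by_cases hn : n = 0
  · subst hn
    simp only [Finset.univ_eq_empty, Finset.sum_empty]
    have : spectrum ℝ ((A * (((1 - m) * specRad B) • (1 : Matrix (Fin 0) (Fin 0) ℝ) + m • B)) *
          Matrix.diagonal d) = ∅ := by
      ext x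
      simp [spectrum.mem_iff, isUnit_of_subsingleton]
    simp [specRad, this]
  have hne : Nonempty (Fin n) := Fin.pos_iff_nonempty.mp (Nat.pos_of_ne_zero hn)
  set w := vm m with hwdef
  set rB := specRad B with hrB
  set M := A * (((1 - m) * rB) • (1 : Matrix (Fin n) (Fin n) ℝ) + m • B) with hMdef
  set r := specRad (M * Matrix.diagonal d) with hrdef
  set sv : Fin n → ℝ := fun i => Real.sqrt (v i) / Real.sqrt (u i) with hsv
  set su : Fin n → ℝ := fun i => Real.sqrt (u i) / Real.sqrt (v i) with hsu
  set μ : Fin n → ℝ := fun i => lamA i * ((1 - m) * rB + m * lamB i) with hμ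
  have hsu0 : ∀ i, Real.sqrt (u i) ≠ 0 := fun i => Real.sqrt_ne_zero'.mpr (hu i)
  have hsv0 : ∀ i, Real.sqrt (v i) ≠ 0 := fun i => Real.sqrt_ne_zero'.mpr (hv i)
  have husq : ∀ i, Real.sqrt (u i) ^ 2 = u i := fun i => Real.sq_sqrt (hu i).le
  have hvsq : ∀ i, Real.sqrt (v i) ^ 2 = v i := fun i => Real.sq_sqrt (hv i).le
  have h1 : Matrix.diagonal su * Matrix.diagonal sv = 1 := by
    rw [Matrix.diagonal_mul_diagonal, ← Matrix.diagonal_one]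
    refine congrArg Matrix.diagonal (funext fun i => ?_)
    show su i * sv i = 1
    rw [hsu, hsv]
    rw [div_mul_div_comm, mul_comm (Real.sqrt (v i)) (Real.sqrt (u i)),
      div_self (mul_ne_zero (hsu0 i) (hsv0 i))]
  have hSl : ∀ X : Matrix (Fin n) (Fin n) ℝ,
      Matrix.diagonal su * (Matrix.diagonal sv * X) = X := by
    intro X; rw [← Matrix.mul_assoc, h1, Matrix.one_mul]
  have hKl : ∀ X : Matrix (Fin n) (Fin n) ℝ, Kᵀ * (K * X) = X := by
    intro X; rw [← Matrix.mul_assoc, hK, Matrix.one_mul]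
  have hAB : A * B = Matrix.diagonal sv *
      (K * (Matrix.diagonal lamA * Matrix.diagonal lamB) * Kᵀ) * Matrix.diagonal su := by
    rw [hAdec, hBdec]
    simp only [Matrix.mul_assoc]
    rw [hSl, hKl]
  have hdm : Matrix.diagonal μ = ((1 - m) * rB) • Matrix.diagonal lamA +
      m • (Matrix.diagonal lamA * Matrix.diagonal lamB) := by
    rw [Matrix.diagonal_mul_diagonal, ← Matrix.diagonal_smul, ← Matrix.diagonal_smul,
      Matrix.diagonal_add]
    refine congrArg Matrix.diagonal (funext fun i => ?_)
    show μ i = ((1 - m) * rB) • lamA i + m • (lamA i * lamB i)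
    rw [hμ, smul_eq_mul, smul_eq_mul]; ring
  have hM : M = Matrix.diagonal sv * (K * Matrix.diagonal μ * Kᵀ) * Matrix.diagonal su := by
    have hc : M = ((1 - m) * rB) • A + m • (A * B) := by
      rw [hMdef, Matrix.mul_add, Matrix.mul_smul, Matrix.mul_one, Matrix.mul_smul]
    rw [hc, hAB, hdm, hAdec]
    simp only [Matrix.mul_add, Matrix.add_mul, Matrix.mul_smul, Matrix.smul_mul,
      Matrix.mul_assoc]
  have hMjk : ∀ j k, M j k = sv j * ((∑ i, K j i * μ i * K k i)) * su k := by
    intro j k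
    rw [hM]
    rw [Matrix.mul_diagonal, Matrix.diagonal_mul]
    congr 1
    congr 1
    rw [Matrix.mul_apply]
    refine Finset.sum_congr rfl fun i _ => ?_
    rw [Matrix.mul_diagonal, Matrix.transpose_apply]
  have heigj : ∀ j, ∑ k, M j k * (d k * w k) = r * w j := by
    intro j
    have h := congrFun heig j
    simp only [Matrix.mulVec, dotProduct, Pi.smul_apply, smul_eq_mul] at h
    rw [← h]
    refine Finset.sum_congr rfl fun k _ => ?_
    rw [Matrix.mul_diagonal]
    ring
  -- scalars
  set a : Fin n → ℝ := fun j => d j * Real.sqrt (u j / v j) * w j with ha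
  set c2 : ℝ := ∑ j, d j * (u j / v j) * w j ^ 2 with hc2
  have hc2pos : 0 < c2 := by
    rw [hc2]
    refine Finset.sum_pos (fun j _ => ?_) Finset.univ_nonempty
    have h1 := hwpos j; have h2 := hd j; have h3 := hu j; have h4 := hv j
    positivity
  set x : Fin n → ℝ := fun i => ∑ j, K j i * a j with hx
  have hsqdiv : ∀ j, Real.sqrt (u j / v j) = Real.sqrt (u j) / Real.sqrt (v j) :=
    fun j => Real.sqrt_div (hu j).le (v j)
  have key : ∑ i, μ i * x i ^ 2 = r * c2 := by
    have step1 : ∑ i, μ i * x i ^ 2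
        = ∑ j, ∑ k, a j * a k * (∑ i, K j i * μ i * K k i) := by
      simp only [hx, sq, Finset.mul_sum, Finset.sum_mul]
      rw [Finset.sum_comm]
      refine Finset.sum_congr rfl fun j _ => ?_
      rw [Finset.sum_comm]
      refine Finset.sum_congr rfl fun k _ => ?_
      refine Finset.sum_congr rfl fun i _ => ?_
      ring
    have step2 : ∀ j k, a j * a k * (∑ i, K j i * μ i * K k i)
        = (d j * (u j / v j) * w j) * (M j k * (d k * w k)) := by
      intro j k
      rw [hMjk j k]
      have e1 : Real.sqrt (u j / v j) = (u j / v j) * sv j := by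
        have h5 : u j / v j = (Real.sqrt (u j) / Real.sqrt (v j)) ^ 2 := by
          rw [div_pow, husq j, hvsq j]
        rw [hsqdiv j, h5, hsv]
        show Real.sqrt (u j) / Real.sqrt (v j)
            = (Real.sqrt (u j) / Real.sqrt (v j)) ^ 2 * (Real.sqrt (v j) / Real.sqrt (u j))
        field_simp [hsu0 j, hsv0 j]
      have e2 : Real.sqrt (u k / v k) = su k := by
        rw [hsqdiv k, hsu]
      simp only [ha]
      rw [e1, e2]
      ring
    rw [step1]
    calc ∑ j, ∑ k, a j * a k * (∑ i, K j i * μ i * K k i)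
        = ∑ j, (d j * (u j / v j) * w j) * ∑ k, M j k * (d k * w k) := by
          refine Finset.sum_congr rfl fun j _ => ?_
          rw [Finset.mul_sum]
          exact Finset.sum_congr rfl fun k _ => step2 j k
      _ = ∑ j, (d j * (u j / v j) * w j) * (r * w j) := by
          refine Finset.sum_congr rfl fun j _ => ?_
          rw [heigj j]
      _ = r * c2 := by
          rw [hc2, Finset.mul_sum]
          exact Finset.sum_congr rfl fun j _ => by ring
  -- finish
  have hgoal : ∀ i, lamA i * ((1 - m) * rB + m * lamB i) *
      ((∑ j, K j i * d j * Real.sqrt (u j / v j) * w j) / Real.sqrt c2) ^ 2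
      = μ i * x i ^ 2 / c2 := by
    intro i
    have hxx : ∑ j, K j i * d j * Real.sqrt (u j / v j) * w j = x i := by
      rw [hx]
      exact Finset.sum_congr rfl fun j _ => by rw [ha]; ring
    rw [hxx, div_pow, Real.sq_sqrt hc2pos.le, hμ]
    ring
  rw [Finset.sum_congr rfl fun i _ => hgoal i, ← Finset.sum_div, key,
    mul_div_assoc, div_self hc2pos.ne', mul_one]
end

section
/- Let A and B be commuting n×n symmetrizable irreducible nonnegative matrices, D a nonscalar positive diagonal matrix, and M(m) = A[(1−m) r(B) I + m B]. If all non-Perron eigenvalues of A are zero, then r(M(m)D) is constant in m on [0,1]. -/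
open Matrix Polynomial

lemma memSpec_iff {n : ℕ} (M : Matrix (Fin n) (Fin n) ℝ) (μ : ℝ) :
    μ ∈ spectrum ℝ M ↔ ∃ x : Fin n → ℝ, x ≠ 0 ∧ M *ᵥ x = μ • x := by
  rw [spectrum.mem_iff, Matrix.isUnit_iff_isUnit_det, isUnit_iff_ne_zero, not_ne_iff,
      ← Matrix.exists_mulVec_eq_zero_iff]
  constructor
  · rintro ⟨v, hv0, hv⟩
    refine ⟨v, hv0, ?_⟩
    rw [Matrix.sub_mulVec, Algebra.algebraMap_eq_smul_one, Matrix.smul_mulVec,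
        Matrix.one_mulVec, sub_eq_zero] at hv
    exact hv.symm
  · rintro ⟨v, hv0, hv⟩
    refine ⟨v, hv0, ?_⟩
    rw [Matrix.sub_mulVec, Algebra.algebraMap_eq_smul_one, Matrix.smul_mulVec,
        Matrix.one_mulVec, hv, sub_self]

lemma sq_eq_smul {n : ℕ} (A : Matrix (Fin n) (Fin n) ℝ) (hAsym : Symmetrizable A)
    (hzero : ∀ μ ∈ spectrum ℝ A, μ ≠ specRad A → μ = 0) :
    A * A = specRad A • A := by
  obtain ⟨dL, dR, S, hdL, hdR, hS, hAeq⟩ := hAsym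
  set r := specRad A with hr
  set e : Fin n → ℝ := fun i => Real.sqrt (dR i / dL i) with he
  have hepos : ∀ i, 0 < e i := fun i => Real.sqrt_pos.mpr (div_pos (hdR i) (hdL i))
  have hdRe : ∀ i, dR i = e i * e i * dL i := by
    intro i
    have h2 : e i * e i = dR i / dL i :=
      Real.mul_self_sqrt (le_of_lt (div_pos (hdR i) (hdL i)))
    rw [h2, div_mul_cancel₀ _ (hdL i).ne']
  set E : Matrix (Fin n) (Fin n) ℝ := Matrix.diagonal e with hE
  set E' : Matrix (Fin n) (Fin n) ℝ := Matrix.diagonal (fun i => (e i)⁻¹) with hE'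
  have hEE' : E * E' = 1 := by
    rw [hE, hE', diagonal_mul_diagonal]
    have h9 : (fun i => e i * (e i)⁻¹) = fun _ : Fin n => (1:ℝ) :=
      funext fun i => mul_inv_cancel₀ (hepos i).ne'
    rw [h9, Matrix.diagonal_one]
  have hE'E : E' * E = 1 := by
    rw [hE, hE', diagonal_mul_diagonal]
    have h9 : (fun i => (e i)⁻¹ * e i) = fun _ : Fin n => (1:ℝ) :=
      funext fun i => inv_mul_cancel₀ (hepos i).ne'
    rw [h9, Matrix.diagonal_one]
  set M : Matrix (Fin n) (Fin n) ℝ := E * A * E' with hM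
  have hAM : E' * M * E = A := by
    rw [hM]
    have h7 : E' * (E * A * E') * E = E' * E * A * (E' * E) := by
      simp only [Matrix.mul_assoc]
    rw [h7, hE'E, Matrix.one_mul, Matrix.mul_one]
  -- entries of M
  have hent : ∀ a b, M a b = e a * (dL a * S a b * dR b) * (e b)⁻¹ := by
    intro a b
    rw [hM, hE, hE', hAeq, Matrix.mul_diagonal, Matrix.diagonal_mul,
        Matrix.mul_diagonal, Matrix.diagonal_mul]
  have hMh : M.IsHermitian := by
    rw [Matrix.IsHermitian, Matrix.conjTranspose_eq_transpose_of_trivial]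
    ext a b
    rw [Matrix.transpose_apply, hent, hent, hS.apply, hdRe a, hdRe b]
    have hea := (hepos a).ne'
    have heb := (hepos b).ne'
    field_simp
  -- spectrum of M is contained in spectrum of A
  have hspec : ∀ μ : ℝ, μ ∈ spectrum ℝ M → μ ∈ spectrum ℝ A := by
    intro μ hμ
    rw [memSpec_iff] at hμ ⊢
    obtain ⟨x, hx0, hx⟩ := hμ
    refine ⟨E' *ᵥ x, ?_, ?_⟩
    · intro h
      apply hx0
      have h8 : E *ᵥ (E' *ᵥ x) = 0 := by rw [h, Matrix.mulVec_zero]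
      rwa [Matrix.mulVec_mulVec, hEE', Matrix.one_mulVec] at h8
    · have h9 : A *ᵥ (E' *ᵥ x) = (A * E') *ᵥ x := Matrix.mulVec_mulVec _ _ _
      rw [h9]
      have h4 : A * E' = E' * M := by
        rw [← hAM]
        have h5 : E' * M * E * E' = E' * M * (E * E') := Matrix.mul_assoc _ _ _
        rw [h5, hEE', Matrix.mul_one]
      rw [h4, ← Matrix.mulVec_mulVec, hx, Matrix.mulVec_smul]
  -- eigenvalues of M are 0 or r
  have hev : ∀ i, hMh.eigenvalues i = 0 ∨ hMh.eigenvalues i = r := by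
    intro i
    have h5 := hspec _ (hMh.eigenvalues_mem_spectrum_real i)
    by_cases h6 : hMh.eigenvalues i = r
    · exact Or.inr h6
    · exact Or.inl (hzero _ h5 h6)
  -- M * M = r • M
  set V : Matrix (Fin n) (Fin n) ℝ := (Matrix.IsHermitian.eigenvectorUnitary hMh :
    Matrix (Fin n) (Fin n) ℝ) with hV
  set D : Matrix (Fin n) (Fin n) ℝ :=
    Matrix.diagonal (RCLike.ofReal ∘ hMh.eigenvalues) with hD
  have hVs : star V * V = 1 := by
    exact_mod_cast Unitary.coe_star_mul_self (Matrix.IsHermitian.eigenvectorUnitary hMh)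
  have hDD : D * D = r • D := by
    rw [hD, diagonal_mul_diagonal, ← Matrix.diagonal_smul]
    have h9 : (fun i => (RCLike.ofReal ∘ hMh.eigenvalues : Fin n → ℝ) i *
          (RCLike.ofReal ∘ hMh.eigenvalues : Fin n → ℝ) i)
        = r • (RCLike.ofReal ∘ hMh.eigenvalues : Fin n → ℝ) := by
      funext i
      rcases hev i with h | h <;>
        simp [Function.comp, h, Pi.smul_apply, smul_eq_mul]
    rw [h9]
  have hMM : M * M = r • M := by
    have hst := hMh.spectral_theorem
    rw [hst]
    calc (V * D * star V) * (V * D * star V)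
        = V * D * ((star V * V) * (D * star V)) := by simp only [Matrix.mul_assoc]
      _ = V * (D * D) * star V := by
          rw [hVs, Matrix.one_mul]; simp only [Matrix.mul_assoc]
      _ = V * (r • D) * star V := by rw [hDD]
      _ = r • (V * D * star V) := by
          rw [Matrix.mul_smul, Matrix.smul_mul]
  -- conclude
  have h10 : A * A = (E' * M * E) * (E' * M * E) := by rw [hAM]
  have h11 : (E' * M * E) * (E' * M * E) = E' * M * ((E * E') * (M * E)) := by
    simp only [Matrix.mul_assoc]
  rw [h10, h11, hEE', Matrix.one_mul]
  have h12 : E' * M * (M * E) = E' * (M * M) * E := by simp only [Matrix.mul_assoc]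
  rw [h12, hMM, Matrix.mul_smul, Matrix.smul_mul, hAM]

theorem stmt_6 {n : ℕ} (A B : Matrix (Fin n) (Fin n) ℝ)
    (hA0 : ∀ i j, 0 ≤ A i j) (hB0 : ∀ i j, 0 ≤ B i j)
    (hAirr : IsIrred A) (hBirr : IsIrred B)
    (hAsym : Symmetrizable A) (hBsym : Symmetrizable B)
    (hcomm : A * B = B * A)
    (d : Fin n → ℝ) (hd : ∀ i, 0 < d i)
    (hdns : ∀ c : ℝ, Matrix.diagonal d ≠ c • (1 : Matrix (Fin n) (Fin n) ℝ))
    (hzero : ∀ μ ∈ spectrum ℝ A, μ ≠ specRad A → μ = 0) :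
    ∀ m₁ ∈ Set.Icc (0:ℝ) 1, ∀ m₂ ∈ Set.Icc (0:ℝ) 1,
      specRad ((A * (((1 - m₁) * specRad B) • (1 : Matrix (Fin n) (Fin n) ℝ) + m₁ • B)) *
          Matrix.diagonal d)
      = specRad ((A * (((1 - m₂) * specRad B) • (1 : Matrix (Fin n) (Fin n) ℝ) + m₂ • B)) *
          Matrix.diagonal d) := by
  intro m₁ _ m₂ _
  suffices hAB : A * B = specRad B • A by
    have hMm : ∀ m : ℝ, A * (((1 - m) * specRad B) • (1 : Matrix (Fin n) (Fin n) ℝ) + m • B)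
        = specRad B • A := by
      intro m
      rw [mul_add, mul_smul_comm, mul_one, mul_smul_comm, hAB, smul_smul, ← add_smul]
      congr 1
      ring
    rw [hMm m₁, hMm m₂]
  -- n is positive
  have hn : 0 < n := by
    rcases Nat.eq_zero_or_pos n with h | h
    · exfalso
      apply hdns 0
      subst h
      ext i j
      exact i.elim0
    · exact h
  set i0 : Fin n := ⟨0, hn⟩ with hi0
  set r := specRad A with hr
  have hAA : A * A = r • A := sq_eq_smul A hAsym hzero
  -- specRad A is nonnegative
  have hrdef : r = sSup (abs '' spectrum ℝ A) := rfl
  have hr0 : 0 ≤ r := by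
    rcases Set.eq_empty_or_nonempty (abs '' spectrum ℝ A) with hS | hS
    · rw [hrdef, hS, Real.sSup_empty]
    · have hsub : abs '' spectrum ℝ A ⊆ {0, |r|} := by
        rintro y ⟨μ, hμ, rfl⟩
        by_cases hμr : μ = r
        · right; rw [hμr]; rfl
        · left; rw [hzero μ hμ hμr]; simp
      have hfin : (abs '' spectrum ℝ A).Finite :=
        ((Set.finite_singleton (0:ℝ)).insert |r|).subset (by
          intro y hy
          rcases hsub hy with h | h
          · exact Set.mem_insert_iff.mpr (Or.inr h)
          · exact Set.mem_insert_iff.mpr (Or.inl h))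
      obtain ⟨μ, _, hμe⟩ := hS.csSup_mem hfin
      rw [hrdef, ← hμe]
      exact abs_nonneg μ
  -- powers of A
  have hpow : ∀ t : ℕ, A ^ (t + 1) = r ^ t • A := by
    intro t
    induction t with
    | zero => simp
    | succ t ih =>
      rw [pow_succ, ih, Matrix.smul_mul, hAA, smul_smul, ← pow_succ]
  have hrpos : 0 < r := by
    rcases hr0.lt_or_eq with h | h
    · exact h
    · exfalso
      obtain ⟨t, ht⟩ := hAirr i0 i0
      rw [hpow t] at ht
      simp only [Matrix.smul_apply, smul_eq_mul] at ht
      rcases Nat.eq_zero_or_pos t with ht0 | ht0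
      · subst ht0
        simp only [pow_zero, one_mul] at ht
        have h1 : (A * A) i0 i0 = 0 := by rw [hAA, ← h]; simp
        have h2 : 0 < (A * A) i0 i0 := by
          rw [Matrix.mul_apply]
          exact Finset.sum_pos' (fun k _ => mul_nonneg (hA0 _ _) (hA0 _ _))
            ⟨i0, Finset.mem_univ _, mul_pos ht ht⟩
        linarith
      · rw [← h, zero_pow ht0.ne', zero_mul] at ht
        exact lt_irrefl 0 ht
  -- A has positive entries
  have hApos : ∀ i j, 0 < A i j := by
    intro i j
    obtain ⟨t, ht⟩ := hAirr i j
    rw [hpow t] at ht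
    simp only [Matrix.smul_apply, smul_eq_mul] at ht
    by_contra hc
    push_neg at hc
    nlinarith [pow_pos hrpos t]
  -- columns of A are eigenvectors
  have hcolA : ∀ j, A *ᵥ (fun i => A i j) = r • (fun i => A i j) := by
    intro j
    funext i
    have h1 : (A * A) i j = (r • A) i j := by rw [hAA]
    simpa [Matrix.mul_apply, Matrix.mulVec, dotProduct, Matrix.smul_apply,
      smul_eq_mul] using h1
  -- nonnegative eigenvector with a zero coordinate is zero
  have hker : ∀ z : Fin n → ℝ, A *ᵥ z = r • z → (∀ i, 0 ≤ z i) → (∃ k, z k = 0) → z = 0 := by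
    rintro z hz hz0 ⟨k, hk⟩
    by_contra hne
    obtain ⟨l, hl⟩ : ∃ l, z l ≠ 0 := by
      by_contra hall
      push_neg at hall
      exact hne (funext hall)
    have hzl : 0 < z l := (hz0 l).lt_of_ne (Ne.symm hl)
    have h1 : (A *ᵥ z) k = r * z k := by rw [hz]; simp
    have h2 : 0 < (A *ᵥ z) k := by
      have h3 : (A *ᵥ z) k = ∑ m, A k m * z m := rfl
      rw [h3]
      exact Finset.sum_pos' (fun m _ => mul_nonneg (hA0 _ _) (hz0 m))
        ⟨l, Finset.mem_univ _, mul_pos (hApos k l) hzl⟩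
    rw [h1, hk, mul_zero] at h2
    exact lt_irrefl 0 h2
  -- columns of A are proportional
  have hprop : ∀ j, ∃ c : ℝ, 0 < c ∧ ∀ i, A i j = c * A i i0 := by
    intro j
    obtain ⟨k0, -, hk0⟩ := Finset.exists_min_image Finset.univ (fun k => A k j / A k i0)
      ⟨i0, Finset.mem_univ i0⟩
    refine ⟨A k0 j / A k0 i0, div_pos (hApos _ _) (hApos _ _), ?_⟩
    set c := A k0 j / A k0 i0 with hc
    set z : Fin n → ℝ := fun i => A i j - c * A i i0 with hzdef
    have hz0 : ∀ i, 0 ≤ z i := by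
      intro i
      have h3 := hk0 i (Finset.mem_univ i)
      have h4 : c * A i i0 ≤ A i j := (le_div_iff₀ (hApos i i0)).mp h3
      simpa [hzdef] using sub_nonneg.mpr h4
    have hzk : z k0 = 0 := by
      simp only [hzdef, hc]
      rw [div_mul_cancel₀ _ (hApos k0 i0).ne', sub_self]
    have hzeig : A *ᵥ z = r • z := by
      have hz4 : z = (fun i => A i j) - c • (fun i => A i i0) := rfl
      rw [hz4, Matrix.mulVec_sub, Matrix.mulVec_smul, hcolA, hcolA]
      funext i
      simp only [Pi.sub_apply, Pi.smul_apply, smul_eq_mul]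
      ring
    have h5 := hker z hzeig hz0 ⟨k0, hzk⟩
    intro i
    have h6 := congrFun h5 i
    simp only [hzdef, Pi.zero_apply] at h6
    linarith
  choose v hv0 hvA using hprop
  -- sum identity (not strictly needed but harmless)
  -- key scalar
  set s := ∑ k, ∑ l, v l * B l k * A k i0 with hs
  have hABA : (A * B) * A = r • (A * B) := by
    calc (A * B) * A = A * (B * A) := Matrix.mul_assoc _ _ _
      _ = A * (A * B) := by rw [hcomm]
      _ = (A * A) * B := (Matrix.mul_assoc _ _ _).symm
      _ = (r • A) * B := by rw [hAA]
      _ = r • (A * B) := Matrix.smul_mul _ _ _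
  have h9 : ∀ i j, r * (A * B) i j = A i j * s := by
    intro i j
    have h10 : ((A * B) * A) i j = (r • (A * B)) i j := by rw [hABA]
    rw [Matrix.mul_apply, Matrix.smul_apply, smul_eq_mul] at h10
    have h11 : ∀ k, (A * B) i k * A k j = (v j * A i i0) * (∑ l, v l * B l k * A k i0) := by
      intro k
      rw [Matrix.mul_apply, Finset.sum_mul, Finset.mul_sum]
      apply Finset.sum_congr rfl
      intro l _
      rw [hvA l i, hvA j k]
      ring
    rw [Finset.sum_congr rfl (fun k _ => h11 k), ← Finset.mul_sum] at h10
    rw [← h10, hvA j i, hs]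
  have hABs : A * B = (s / r) • A := by
    ext i j
    rw [Matrix.smul_apply, smul_eq_mul]
    have h12 := h9 i j
    rw [div_mul_eq_mul_div, eq_div_iff hrpos.ne']
    linear_combination h12
  set c := s / r with hcdef
  have hBA : B * A = c • A := by rw [← hcomm, hABs]
  have hBu : B *ᵥ (fun i => A i i0) = c • (fun i => A i i0) := by
    funext i
    have h12 : (B * A) i i0 = (c • A) i i0 := by rw [hBA]
    simpa [Matrix.mul_apply, Matrix.mulVec, dotProduct, Matrix.smul_apply,
      smul_eq_mul] using h12
  have hBusum : ∀ i, ∑ k, B i k * A k i0 = c * A i i0 := by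
    intro i
    have h13 := congrFun hBu i
    simpa [Matrix.mulVec, dotProduct, Pi.smul_apply, smul_eq_mul] using h13
  have hc0 : 0 ≤ c := by
    have h14 : (0:ℝ) ≤ ∑ k, B i0 k * A k i0 :=
      Finset.sum_nonneg fun k _ => mul_nonneg (hB0 _ _) (hA0 _ _)
    rw [hBusum i0] at h14
    nlinarith [hApos i0 i0]
  have hcspec : c ∈ spectrum ℝ B := by
    rw [memSpec_iff]
    refine ⟨fun i => A i i0, ?_, hBu⟩
    intro h
    have h15 := congrFun h i0
    simp only [Pi.zero_apply] at h15
    exact (hApos i0 i0).ne' h15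
  have hbound : ∀ μ ∈ spectrum ℝ B, |μ| ≤ c := by
    intro μ hμ
    rw [memSpec_iff] at hμ
    obtain ⟨x, hx0, hx⟩ := hμ
    obtain ⟨i1, -, hi1⟩ := Finset.exists_max_image Finset.univ (fun k => |x k| / A k i0)
      ⟨i0, Finset.mem_univ i0⟩
    set t := |x i1| / A i1 i0 with ht
    have htpos : 0 < t := by
      obtain ⟨l, hl⟩ : ∃ l, x l ≠ 0 := by
        by_contra hall
        push_neg at hall
        exact hx0 (funext hall)
      have h16 : 0 < |x l| / A l i0 := div_pos (abs_pos.mpr hl) (hApos l i0)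
      exact lt_of_lt_of_le h16 (hi1 l (Finset.mem_univ l))
    have hle : ∀ k, |x k| ≤ t * A k i0 := by
      intro k
      exact (div_le_iff₀ (hApos k i0)).mp (hi1 k (Finset.mem_univ k))
    have h17 : μ * x i1 = ∑ k, B i1 k * x k := by
      have h18 := congrFun hx i1
      simpa [Matrix.mulVec, dotProduct, Pi.smul_apply, smul_eq_mul] using h18.symm
    have h16 : |μ| * |x i1| ≤ t * (c * A i1 i0) := by
      calc |μ| * |x i1| = |∑ k, B i1 k * x k| := by rw [← abs_mul, h17]
        _ ≤ ∑ k, |B i1 k * x k| := Finset.abs_sum_le_sum_abs _ _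
        _ = ∑ k, B i1 k * |x k| := by
            apply Finset.sum_congr rfl
            intro k _
            rw [abs_mul, abs_of_nonneg (hB0 i1 k)]
        _ ≤ ∑ k, B i1 k * (t * A k i0) :=
            Finset.sum_le_sum fun k _ => mul_le_mul_of_nonneg_left (hle k) (hB0 i1 k)
        _ = t * ∑ k, B i1 k * A k i0 := by
            rw [Finset.mul_sum]
            apply Finset.sum_congr rfl
            intro k _
            ring
        _ = t * (c * A i1 i0) := by rw [hBusum i1]
    have h18 : |x i1| = t * A i1 i0 := by
      rw [ht, div_mul_cancel₀ _ (hApos i1 i0).ne']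
    rw [h18] at h16
    by_contra hcon
    push_neg at hcon
    have h20 : c * (t * A i1 i0) < |μ| * (t * A i1 i0) :=
      mul_lt_mul_of_pos_right hcon (mul_pos htpos (hApos i1 i0))
    have h21 : t * (c * A i1 i0) = c * (t * A i1 i0) := by ring
    rw [h21] at h16
    linarith
  have hrB : specRad B = c := by
    have hrBdef : specRad B = sSup (abs '' spectrum ℝ B) := rfl
    have hne : (abs '' spectrum ℝ B).Nonempty := ⟨|c|, c, hcspec, rfl⟩
    have hub : ∀ y ∈ abs '' spectrum ℝ B, y ≤ c := by
      rintro y ⟨μ, hμ, rfl⟩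
      exact hbound μ hμ
    have hbdd : BddAbove (abs '' spectrum ℝ B) := ⟨c, hub⟩
    apply le_antisymm
    · rw [hrBdef]
      exact csSup_le hne hub
    · have h19 : |c| ≤ sSup (abs '' spectrum ℝ B) := le_csSup hbdd ⟨c, hcspec, rfl⟩
      rw [hrBdef]
      rwa [abs_of_nonneg hc0] at h19
  rw [hrB]
  exact hABs
end

section
/- Let P = [[0,1],[1,0]] and let D be a nonscalar positive 2×2 diagonal matrix. Then r([(1−m)I + mP]² D) is decreasing in m on [0, 1/2] and increasing in m on [1/2, 1]. -/
open Matrix Polynomial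

lemma spectrum_fin_two (a b c d l₁ l₂ : ℝ) (h1 : l₁ + l₂ = a + d)
    (h2 : l₁ * l₂ = a * d - b * c) :
    spectrum ℝ !![a, b; c, d] = {l₁, l₂} := by
  ext x
  have hm : x • (1 : Matrix (Fin 2) (Fin 2) ℝ) - !![a, b; c, d]
      = !![x - a, -b; -c, x - d] := by
    ext i j; fin_cases i <;> fin_cases j <;> simp [Matrix.one_apply]
  have key : (x - a) * (x - d) - (-b) * (-c) = (x - l₁) * (x - l₂) := by
    linear_combination x * h1 - h2
  simp only [spectrum.mem_iff, Algebra.algebraMap_eq_smul_one,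
    Matrix.isUnit_iff_isUnit_det, hm, Matrix.det_fin_two_of,
    isUnit_iff_ne_zero, not_not, key, mul_eq_zero, sub_eq_zero,
    Set.mem_insert_iff, Set.mem_singleton_iff]

lemma specRad_pair (a b c d l₁ l₂ : ℝ) (h1 : l₁ + l₂ = a + d)
    (h2 : l₁ * l₂ = a * d - b * c) (h3 : 0 ≤ l₂) (h4 : l₂ ≤ l₁) :
    specRad !![a, b; c, d] = l₁ := by
  unfold specRad
  rw [spectrum_fin_two a b c d l₁ l₂ h1 h2, Set.image_pair, csSup_pair,
    abs_of_nonneg (h3.trans h4), abs_of_nonneg h3]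
  exact sup_eq_left.mpr h4

lemma matrix_eq (m d₁ d₂ : ℝ) :
    (((1 - m) • (1 : Matrix (Fin 2) (Fin 2) ℝ) + m • !![0, 1; 1, 0]) ^ 2) *
      Matrix.diagonal ![d₁, d₂]
    = !![((1-m)^2+m^2)*d₁, (2*(1-m)*m)*d₂; (2*(1-m)*m)*d₁, ((1-m)^2+m^2)*d₂] := by
  have h1 : (1 - m) • (1 : Matrix (Fin 2) (Fin 2) ℝ) + m • !![0, 1; 1, 0]
      = !![1-m, m; m, 1-m] := by
    ext i j; fin_cases i <;> fin_cases j <;> simp [Matrix.one_apply]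
  rw [h1, pow_two]
  ext i j
  fin_cases i <;> fin_cases j <;>
    simp [Matrix.mul_apply, Fin.sum_univ_two, Matrix.diagonal_apply] <;>
    exact Or.inl (by ring)

lemma Dpos (s p t : ℝ) (hp : 0 < p) (hsp : 4*p < s^2) (ht : 0 ≤ t) :
    0 < ((1+t)*s/2)^2 - 4*t*p := by
  have h2 : (0:ℝ) < 1 + t := by linarith
  nlinarith [mul_nonneg hp.le (sq_nonneg (1-t)),
    mul_pos (pow_pos h2 2) (show (0:ℝ) < s^2-4*p by linarith)]

noncomputable def Ffn (s p t : ℝ) : ℝ :=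
  ((1+t)*s/2 + Real.sqrt (((1+t)*s/2)^2 - 4*t*p)) / 2

lemma specRad_eq (d₁ d₂ : ℝ) (hd₁ : 0 < d₁) (hd₂ : 0 < d₂) (hne : d₁ ≠ d₂) (m : ℝ) :
    specRad ((((1 - m) • (1 : Matrix (Fin 2) (Fin 2) ℝ) + m • !![0, 1; 1, 0]) ^ 2) *
        Matrix.diagonal ![d₁, d₂])
      = Ffn (d₁+d₂) (d₁*d₂) ((1-2*m)^2) := by
  have h0 : d₁ - d₂ ≠ 0 := sub_ne_zero.mpr hne
  have hd : 0 < (d₁-d₂)^2 := by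
    rcases h0.lt_or_gt with h | h <;> nlinarith
  have hsp : 4*(d₁*d₂) < (d₁+d₂)^2 := by nlinarith
  have hp : 0 < d₁*d₂ := mul_pos hd₁ hd₂
  have ht : (0:ℝ) ≤ (1-2*m)^2 := sq_nonneg _
  have hD := Dpos (d₁+d₂) (d₁*d₂) ((1-2*m)^2) hp hsp ht
  set t : ℝ := (1-2*m)^2 with htdef
  set s : ℝ := d₁+d₂ with hsdef
  set X : ℝ := (1+t)*s/2 with hXdef
  set r : ℝ := Real.sqrt (X^2 - 4*t*(d₁*d₂)) with hrdef
  have hr2 : r^2 = X^2 - 4*t*(d₁*d₂) := Real.sq_sqrt hD.le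
  have hrnn : 0 ≤ r := Real.sqrt_nonneg _
  have hXnn : 0 ≤ X := by
    rw [hXdef, hsdef]; positivity
  have hrX : r ≤ X := by
    rw [hrdef]
    calc Real.sqrt (X^2 - 4*t*(d₁*d₂)) ≤ Real.sqrt (X^2) := by
          apply Real.sqrt_le_sqrt; nlinarith [mul_nonneg ht hp.le]
      _ = X := Real.sqrt_sq hXnn
  rw [matrix_eq]
  rw [specRad_pair _ _ _ _ ((X + r)/2) ((X - r)/2)
    (by rw [hXdef, hsdef, htdef]; ring)
    (by rw [hXdef, hsdef, htdef] at hr2 ⊢; linear_combination (-1/4 : ℝ) * hr2)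
    (by linarith) (by linarith)]
  rw [Ffn]


lemma key_ineq (s p t : ℝ) (hp : 0 < p) (hs : 0 < s) (hsp : 4*p < s^2)
    (ht : 0 ≤ t) : 4*p - s^2*((1+t)/2) < s * Real.sqrt (((1+t)*s/2)^2 - 4*t*p) := by
  have h1 : 0 < s^2 - 4*p := by linarith
  have hDpos := Dpos s p t hp hsp ht
  have hr : Real.sqrt (((1+t)*s/2)^2 - 4*t*p) ^ 2 = ((1+t)*s/2)^2 - 4*t*p :=
    Real.sq_sqrt hDpos.le
  have hrpos : 0 < Real.sqrt (((1+t)*s/2)^2 - 4*t*p) := Real.sqrt_pos.mpr hDpos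
  rcases le_or_gt (4*p - s^2*((1+t)/2)) 0 with h | h
  · exact h.trans_lt (mul_pos hs hrpos)
  · have h2 : (4*p - s^2*((1+t)/2))^2 < (s * Real.sqrt (((1+t)*s/2)^2 - 4*t*p))^2 := by
      have h3 : (s * Real.sqrt (((1+t)*s/2)^2 - 4*t*p))^2
          = s^2 * (((1+t)*s/2)^2 - 4*t*p) := by rw [mul_pow, hr]
      rw [h3]; nlinarith [mul_pos hp h1]
    exact lt_of_pow_lt_pow_left₀ 2 (mul_pos hs hrpos).le h2

lemma Ffn_lt (s p : ℝ) (hp : 0 < p) (hs : 0 < s) (hsp : 4*p < s^2)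
    {t₁ t₂ : ℝ} (h0 : 0 ≤ t₁) (h : t₁ < t₂) : Ffn s p t₁ < Ffn s p t₂ := by
  have h0' : (0:ℝ) ≤ t₂ := h0.trans h.le
  have k₁ := key_ineq s p t₁ hp hs hsp h0
  have k₂ := key_ineq s p t₂ hp hs hsp h0'
  have hD₁ := Dpos s p t₁ hp hsp h0
  have hD₂ := Dpos s p t₂ hp hsp h0'
  set r₁ := Real.sqrt (((1+t₁)*s/2)^2 - 4*t₁*p) with hr₁def
  set r₂ := Real.sqrt (((1+t₂)*s/2)^2 - 4*t₂*p) with hr₂def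
  have hr₁ : r₁ ^ 2 = ((1+t₁)*s/2)^2 - 4*t₁*p := Real.sq_sqrt hD₁.le
  have hr₂ : r₂ ^ 2 = ((1+t₂)*s/2)^2 - 4*t₂*p := Real.sq_sqrt hD₂.le
  have hr₁p : 0 < r₁ := Real.sqrt_pos.mpr hD₁
  have hr₂p : 0 < r₂ := Real.sqrt_pos.mpr hD₂
  have h5 : 0 < s*(r₁+r₂)/2 + s^2*((1+t₁)/2 + (1+t₂)/2)/2 - 4*p := by linarith
  have h7 : 0 < (r₁+r₂) * ((t₂-t₁)/2*s + (r₂-r₁)) := by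
    have heq : (r₁+r₂) * ((t₂-t₁)/2*s + (r₂-r₁))
        = (t₂-t₁)/2*s*(r₁+r₂) + (r₂^2 - r₁^2) := by ring
    rw [heq, hr₁, hr₂]
    nlinarith [mul_pos (sub_pos.mpr h) h5]
  have h8 : 0 < (t₂-t₁)/2*s + (r₂-r₁) := by
    by_contra hcon
    push_neg at hcon
    nlinarith [mul_pos hr₁p hr₂p]
  unfold Ffn
  rw [← hr₁def, ← hr₂def]
  linarith

theorem stmt_10 (d₁ d₂ : ℝ) (hd₁ : 0 < d₁) (hd₂ : 0 < d₂) (hne : d₁ ≠ d₂) :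
    StrictAntiOn (fun m : ℝ => specRad
      ((((1 - m) • (1 : Matrix (Fin 2) (Fin 2) ℝ) + m • !![0, 1; 1, 0]) ^ 2) *
        Matrix.diagonal ![d₁, d₂])) (Set.Icc (0:ℝ) (1/2)) ∧
    StrictMonoOn (fun m : ℝ => specRad
      ((((1 - m) • (1 : Matrix (Fin 2) (Fin 2) ℝ) + m • !![0, 1; 1, 0]) ^ 2) *
        Matrix.diagonal ![d₁, d₂])) (Set.Icc (1/2 : ℝ) 1) := by
  have h0 : d₁ - d₂ ≠ 0 := sub_ne_zero.mpr hne
  have hd : 0 < (d₁-d₂)^2 := by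
    rcases h0.lt_or_gt with h | h <;> nlinarith
  have hsp : 4*(d₁*d₂) < (d₁+d₂)^2 := by nlinarith
  have hp : 0 < d₁*d₂ := mul_pos hd₁ hd₂
  have hs : 0 < d₁+d₂ := by linarith
  constructor
  · intro m₁ hm₁ m₂ hm₂ hlt
    simp only [specRad_eq d₁ d₂ hd₁ hd₂ hne]
    refine Ffn_lt _ _ hp hs hsp (sq_nonneg _) ?_
    obtain ⟨a1, b1⟩ := hm₁
    obtain ⟨a2, b2⟩ := hm₂
    nlinarith [mul_pos (show (0:ℝ) < 2*(m₂-m₁) by linarith)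
      (show (0:ℝ) < 2-2*m₁-2*m₂ by linarith)]
  · intro m₁ hm₁ m₂ hm₂ hlt
    simp only [specRad_eq d₁ d₂ hd₁ hd₂ hne]
    refine Ffn_lt _ _ hp hs hsp (sq_nonneg _) ?_
    obtain ⟨a1, b1⟩ := hm₁
    obtain ⟨a2, b2⟩ := hm₂
    nlinarith [mul_pos (show (0:ℝ) < 2*(m₂-m₁) by linarith)
      (show (0:ℝ) < 2*m₁+2*m₂-2 by linarith)]
end

section
/- Let P be the n×n transition matrix of an irreducible Markov chain with all eigenvalues real and P_ii < 1 for all i, and τ_i(P) = 1/(1 − P_ii). If all non-Perron eigenvalues of P are negative, then 1 ≤ E_H(τ_i(P)) < 1 + 1/(n−1); if all non-Perron eigenvalues of P are zero, then E_H(τ_i(P)) = 1 + 1/(n−1). -/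
open Matrix Polynomial

/-!
Since `1 / τ_i = 1 - P_ii`, the harmonic mean of the `τ_i` is `n / (n - tr P)`, and the trace is
the sum of the eigenvalues, `1 + s` with `s` the sum of the non-Perron ones. Nonnegativity of `P`
gives `tr P ≥ 0`, i.e. `s ≥ -1`; so `s < 0` puts the harmonic mean in `[1, n / (n - 1))`, and
`s = 0` makes it exactly `n / (n - 1) = 1 + 1 / (n - 1)`.
-/

theorem Matrix.trace_eq_sum_of_charpoly_eq_prod {R ι : Type*} [CommRing R] [Nontrivial R]
    [Fintype ι] [DecidableEq ι] (A : Matrix ι ι R) (lam : ι → R)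
    (h : A.charpoly = ∏ i, (X - C (lam i))) : A.trace = ∑ i, lam i := by
  cases isEmpty_or_nonempty ι
  · simp [Matrix.trace]
  · rw [trace_eq_neg_charpoly_coeff, h, Fintype.card,
      prod_X_sub_C_coeff_card_pred _ _ Finset.univ_nonempty.card_pos, neg_neg]

theorem two_le_of_row_sum_eq_one_of_diag_lt_one {n : ℕ} (P : Matrix (Fin n) (Fin n) ℝ)
    (hProw : ∀ i, ∑ j, P i j = 1) (hdiag : ∀ i, P i i < 1) (i₀ : Fin n) : 2 ≤ n := by
  by_contra! h
  obtain rfl : n = 1 := by have := i₀.pos; omega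
  have hrow := hProw i₀
  rw [Fin.sum_univ_one, Subsingleton.elim 0 i₀] at hrow
  exact (hdiag i₀).ne hrow

theorem one_le_div_sub_sub {n s : ℝ} (hs : -1 ≤ s) (hs0 : s < 0) (hn : 1 < n) :
    1 ≤ n / (n - 1 - s) := by
  rw [le_div_iff₀ (by linarith)]
  linarith

theorem div_sub_sub_lt_one_add_inv {n s : ℝ} (hs0 : s < 0) (hn : 1 < n) :
    n / (n - 1 - s) < 1 + 1 / (n - 1) := by
  rw [div_lt_iff₀ (by linarith)]
  have hn1 : 0 < n - 1 := by linarith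
  field_simp
  nlinarith

theorem div_sub_one_eq_one_add_inv {n : ℝ} (hn : n ≠ 1) : n / (n - 1) = 1 + 1 / (n - 1) := by
  have hn1 : n - 1 ≠ 0 := sub_ne_zero.mpr hn
  field_simp
  ring

theorem stmt_16_general {n : ℕ} (P : Matrix (Fin n) (Fin n) ℝ)
    (hP0 : ∀ i j, 0 ≤ P i j) (hProw : ∀ i, ∑ j, P i j = 1)
    (hdiag : ∀ i, P i i < 1)
    (lam : Fin n → ℝ)
    (hlam : P.charpoly = ∏ i, (X - C (lam i)))
    (i₀ : Fin n) (hPerron : lam i₀ = 1) :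
    ((∀ i, i ≠ i₀ → lam i < 0) →
      1 ≤ (n : ℝ) / ∑ i, (1 / (1 / (1 - P i i))) ∧
      (n : ℝ) / ∑ i, (1 / (1 / (1 - P i i))) < 1 + 1 / ((n : ℝ) - 1)) ∧
    ((∀ i, i ≠ i₀ → lam i = 0) →
      (n : ℝ) / ∑ i, (1 / (1 / (1 - P i i))) = 1 + 1 / ((n : ℝ) - 1)) := by
  set s := ∑ i ∈ Finset.univ.erase i₀, lam i
  have htrace : P.trace = 1 + s := by
    rw [P.trace_eq_sum_of_charpoly_eq_prod lam hlam, ← Finset.add_sum_erase _ _ (Finset.mem_univ i₀),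
      hPerron]
  have hsum : ∑ i, (1 / (1 / (1 - P i i))) = (n : ℝ) - 1 - s := by
    simp only [one_div_one_div, Finset.sum_sub_distrib, Finset.sum_const, Finset.card_univ,
      Fintype.card_fin, nsmul_eq_mul, mul_one]
    rw [show ∑ i, P i i = P.trace from rfl, htrace]
    ring
  have hs : -1 ≤ s := by
    have : 0 ≤ P.trace := Finset.sum_nonneg fun i _ => hP0 i i
    linarith
  have hn2 := two_le_of_row_sum_eq_one_of_diag_lt_one P hProw hdiag i₀
  have hn : (1 : ℝ) < n := by exact_mod_cast hn2
  rw [hsum]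
  refine ⟨fun hneg => ?_, fun hzero => ?_⟩
  · have hs0 : s < 0 := Finset.sum_neg (fun i hi => hneg i (Finset.ne_of_mem_erase hi))
      (Finset.card_pos.mp (by
        rw [Finset.card_erase_of_mem (Finset.mem_univ i₀), Finset.card_univ, Fintype.card_fin]
        omega))
    exact ⟨one_le_div_sub_sub hs hs0 hn, div_sub_sub_lt_one_add_inv hs0 hn⟩
  · have hs0 : s = 0 := Finset.sum_eq_zero fun i hi => hzero i (Finset.ne_of_mem_erase hi)
    rw [hs0, sub_zero]
    exact div_sub_one_eq_one_add_inv hn.ne'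

theorem stmt_16 {n : ℕ} (P : Matrix (Fin n) (Fin n) ℝ)
    (hP0 : ∀ i j, 0 ≤ P i j) (hProw : ∀ i, ∑ j, P i j = 1)
    (hPirr : IsIrred P) (hdiag : ∀ i, P i i < 1)
    (lam : Fin n → ℝ)
    (hlam : P.charpoly = ∏ i, (X - C (lam i)))
    (i₀ : Fin n) (hPerron : lam i₀ = 1) :
    ((∀ i, i ≠ i₀ → lam i < 0) →
      1 ≤ (n : ℝ) / ∑ i, (1 / (1 / (1 - P i i))) ∧
      (n : ℝ) / ∑ i, (1 / (1 / (1 - P i i))) < 1 + 1 / ((n : ℝ) - 1)) ∧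
    ((∀ i, i ≠ i₀ → lam i = 0) →
      (n : ℝ) / ∑ i, (1 / (1 / (1 - P i i))) = 1 + 1 / ((n : ℝ) - 1)) :=
  stmt_16_general P hP0 hProw hdiag lam hlam i₀ hPerron
end

section
/- Let P = (1−α)I + α v eᵀ with v > 0 a probability vector and α ∈ (0, min_i 1/(1−v_i)], and let D be a nonscalar positive diagonal n×n matrix. Then r(P²D) < r(PD) if and only if E_H(τ_i(P)) > 1 + 1/(n−1); r(P²D) = r(PD) if and only if E_H(τ_i(P)) = 1 + 1/(n−1); and r(P²D) > r(PD) if and only if 1 ≤ E_H(τ_i(P)) < 1 + 1/(n−1). -/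
open Matrix Polynomial

/-!
Write `σ = 1 - α` and `P_σ = σ I + (1 - σ) v eᵀ`; then `P_σ² = P_{σ²}`, and conjugating by
`diag (u / d)` with `uᵢ = √(vᵢ dᵢ)` turns `P_σ D` into the symmetric `M σ = σ D + (1 - σ) u uᵀ`,
whose Rayleigh quotient is `σ ∑ dᵢ xᵢ² + (1 - σ) (u ⬝ x)²`. Both spectral radii are largest
eigenvalues: `M σ` is positive semidefinite for `0 ≤ σ ≤ 1` and entrywise nonnegative for `σ < 0`.

* `0 < σ < 1`: for a top unit eigenvector `x` of `M (σ²)`,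
  `λ(M σ²) = σ xᵀ(M σ)x + (1 - σ)(u ⬝ x)² ≤ σ λ(M σ) + (1 - σ) ‖u‖² < λ(M σ)`, the last step
  because `uᵀ(M σ)u > ‖u‖⁴` by strict Jensen for the nonconstant `d`.
* `σ < 0`: for a top unit eigenvector `x` of `M σ`,
  `xᵀ(M σ²)x - λ(M σ) = (σ² - σ)(∑ dᵢ xᵢ² - (u ⬝ x)²) ≥ 0` by a weighted Cauchy–Schwarz
  inequality, whose equality case would make every `dᵢ` equal to `λ(M σ)`.

Finally `∑ (1 - Pᵢᵢ) = α (n - 1)`, so the harmonic-mean conditions just compare `α` with `1`.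
-/

lemma iff_and_iff_and_iff_of_trichotomy {α β : Type*} [LinearOrder α] [LinearOrder β]
    {a b : α} {c d : β} (hlt : a < b → c < d) (heq : a = b → c = d) (hgt : b < a → d < c) :
    (a < b ↔ c < d) ∧ (a = b ↔ c = d) ∧ (b < a ↔ d < c) := by
  rcases lt_trichotomy a b with h | h | h
  · have := hlt h
    exact ⟨iff_of_true h this, iff_of_false h.ne this.ne, iff_of_false h.not_gt this.not_gt⟩
  · have := heq h
    exact ⟨iff_of_false h.not_lt this.not_lt, iff_of_true h this,
      iff_of_false h.symm.not_lt this.symm.not_lt⟩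
  · have := hgt h
    exact ⟨iff_of_false h.not_gt this.not_gt, iff_of_false h.ne' this.ne', iff_of_true h this⟩

lemma exists_ne_of_forall_diagonal_ne_smul_one {ι : Type*} [DecidableEq ι] {d : ι → ℝ}
    (h : ∀ c : ℝ, diagonal d ≠ c • (1 : Matrix ι ι ℝ)) : ∃ i j, d i ≠ d j := by
  by_contra! hd
  rcases isEmpty_or_nonempty ι with hι | ⟨⟨i₀⟩⟩
  · exact h 0 (Subsingleton.elim _ _)
  exact h (d i₀) (by rw [smul_one_eq_diagonal]; exact congrArg diagonal (funext fun i => hd i i₀))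

lemma specRad_eq_of_mul_eq_mul {ι : Type*} [Fintype ι] [DecidableEq ι] {A B S : Matrix ι ι ℝ}
    (hS : IsUnit S) (h : A * S = S * B) : specRad A = specRad B := by
  obtain ⟨S, rfl⟩ := hS
  have hA : A = S * B * (S⁻¹ : (Matrix ι ι ℝ)ˣ) := by rw [← h, Units.mul_inv_cancel_right]
  unfold specRad
  rw [hA, spectrum.units_conjugate]

lemma Matrix.abs_dotProduct_mulVec_le_s18 {ι κ : Type*} [Fintype ι] [Fintype κ]
    {A : Matrix ι κ ℝ} (hA : ∀ i j, 0 ≤ A i j) (x : ι → ℝ) (y : κ → ℝ) :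
    |x ⬝ᵥ A *ᵥ y| ≤ |x| ⬝ᵥ A *ᵥ |y| := by
  simp only [dotProduct, mulVec, Finset.mul_sum]
  refine (Finset.abs_sum_le_sum_abs _ _).trans (Finset.sum_le_sum fun i _ => ?_)
  refine (Finset.abs_sum_le_sum_abs _ _).trans (le_of_eq (Finset.sum_congr rfl fun j _ => ?_))
  simp [abs_mul, abs_of_nonneg (hA i j)]

namespace Matrix.IsHermitian

variable {ι : Type*} [Fintype ι] [DecidableEq ι] {A : Matrix ι ι ℝ} (hA : A.IsHermitian)

lemma dotProduct_eigenvectorBasis_self (k : ι) :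
    ⇑(hA.eigenvectorBasis k) ⬝ᵥ ⇑(hA.eigenvectorBasis k) = 1 := by
  have h := real_inner_self_eq_norm_sq (hA.eigenvectorBasis k)
  rw [hA.eigenvectorBasis.orthonormal.1 k, EuclideanSpace.inner_eq_star_dotProduct] at h
  simpa using h

lemma dotProduct_mulVec_eigenvectorBasis (k : ι) :
    ⇑(hA.eigenvectorBasis k) ⬝ᵥ A *ᵥ ⇑(hA.eigenvectorBasis k) = hA.eigenvalues k := by
  rw [hA.mulVec_eigenvectorBasis, dotProduct_smul, hA.dotProduct_eigenvectorBasis_self,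
    smul_eq_mul, mul_one]

variable [Nonempty ι]

noncomputable def maxEigenvalue : ℝ :=
  Finset.univ.sup' Finset.univ_nonempty hA.eigenvalues

lemma eigenvalues_le_maxEigenvalue (k : ι) : hA.eigenvalues k ≤ hA.maxEigenvalue :=
  Finset.le_sup' _ (Finset.mem_univ k)

lemma exists_eigenvalues_eq_maxEigenvalue : ∃ k, hA.eigenvalues k = hA.maxEigenvalue := by
  obtain ⟨k, -, hk⟩ := Finset.exists_mem_eq_sup' Finset.univ_nonempty hA.eigenvalues
  exact ⟨k, hk.symm⟩

lemma exists_unit_eigenvector_maxEigenvalue :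
    ∃ x : ι → ℝ, x ⬝ᵥ x = 1 ∧ A *ᵥ x = hA.maxEigenvalue • x := by
  obtain ⟨k, hk⟩ := hA.exists_eigenvalues_eq_maxEigenvalue
  exact ⟨_, hA.dotProduct_eigenvectorBasis_self k, hk ▸ hA.mulVec_eigenvectorBasis k⟩

lemma posSemidef_maxEigenvalue_sub :
    (algebraMap ℝ (Matrix ι ι ℝ) hA.maxEigenvalue - A).PosSemidef := by
  refine posSemidef_iff_isHermitian_and_spectrum_nonneg.mpr
    ⟨(isHermitian_diagonal_of_self_adjoint _ (.all _)).sub hA, ?_⟩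
  rintro μ hμ
  rw [← spectrum.singleton_sub_eq, hA.spectrum_real_eq_range_eigenvalues] at hμ
  obtain ⟨_, rfl, _, ⟨k, rfl⟩, rfl⟩ := hμ
  exact sub_nonneg.mpr (hA.eigenvalues_le_maxEigenvalue k)

lemma dotProduct_mulVec_le_s18 (x : ι → ℝ) :
    x ⬝ᵥ A *ᵥ x ≤ hA.maxEigenvalue * (x ⬝ᵥ x) := by
  have := hA.posSemidef_maxEigenvalue_sub.dotProduct_mulVec_nonneg x
  simpa [sub_mulVec, Algebra.algebraMap_eq_smul_one, smul_mulVec, dotProduct_sub] using this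

lemma specRad_eq_maxEigenvalue (h : ∀ k, |hA.eigenvalues k| ≤ hA.maxEigenvalue) :
    specRad A = hA.maxEigenvalue := by
  rw [specRad, hA.spectrum_real_eq_range_eigenvalues, ← Set.range_comp]
  refine IsGreatest.csSup_eq ⟨?_, ?_⟩
  · obtain ⟨k, hk⟩ := hA.exists_eigenvalues_eq_maxEigenvalue
    have hmax := h k
    rw [hk] at hmax
    exact ⟨k, by simp [hk, abs_eq_self.mpr ((abs_nonneg _).trans hmax)]⟩
  · rintro _ ⟨k, rfl⟩
    exact h k

lemma specRad_eq_maxEigenvalue_of_posSemidef (hA' : A.PosSemidef) :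
    specRad A = hA.maxEigenvalue :=
  hA.specRad_eq_maxEigenvalue fun k =>
    (abs_of_nonneg (hA'.eigenvalues_nonneg k)).trans_le (hA.eigenvalues_le_maxEigenvalue k)

lemma specRad_eq_maxEigenvalue_of_nonneg (hA' : ∀ i j, 0 ≤ A i j) :
    specRad A = hA.maxEigenvalue := by
  refine hA.specRad_eq_maxEigenvalue fun k => ?_
  set x := ⇑(hA.eigenvectorBasis k) with hx_def
  have hx : |x| ⬝ᵥ |x| = 1 := by
    rw [← hA.dotProduct_eigenvectorBasis_self k, ← hx_def]
    simp [dotProduct, abs_mul_abs_self]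
  calc |hA.eigenvalues k| = |x ⬝ᵥ A *ᵥ x| := by rw [hA.dotProduct_mulVec_eigenvectorBasis]
    _ ≤ |x| ⬝ᵥ A *ᵥ |x| := abs_dotProduct_mulVec_le_s18 hA' x x
    _ ≤ hA.maxEigenvalue := by simpa [hx] using hA.dotProduct_mulVec_le_s18 |x|

end Matrix.IsHermitian

section diagRankOne

variable {ι : Type*} [DecidableEq ι]

def diagRankOne (σ : ℝ) (d u : ι → ℝ) : Matrix ι ι ℝ :=
  diagonal (σ • d) + (1 - σ) • vecMulVec u u

variable {σ : ℝ} {v d u : ι → ℝ}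

lemma isHermitian_diagRankOne : (diagRankOne σ d u).IsHermitian := by
  refine (isHermitian_diagonal_of_self_adjoint _ (.all _)).add (IsHermitian.smul ?_ (.all _))
  rw [IsHermitian, conjTranspose_eq_transpose_of_trivial, transpose_vecMulVec]

lemma diagRankOne_nonneg (hσ : σ ≤ 1) (hd : ∀ i, 0 ≤ d i) (hu0 : ∀ i, 0 ≤ u i)
    (hu : ∀ i, u i ^ 2 = v i * d i) (hP : ∀ i, 0 ≤ σ + (1 - σ) * v i) (i j : ι) :
    0 ≤ diagRankOne σ d u i j := by
  have h1σ : 0 ≤ 1 - σ := sub_nonneg.mpr hσ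
  rcases eq_or_ne i j with rfl | hij
  · have : σ * d i + (1 - σ) * (u i * u i) = (σ + (1 - σ) * v i) * d i := by
      rw [← sq, hu]; ring
    simpa [diagRankOne, vecMulVec_apply, this] using mul_nonneg (hP i) (hd i)
  · simpa [diagRankOne, vecMulVec_apply, hij] using mul_nonneg h1σ (mul_nonneg (hu0 i) (hu0 j))

variable [Fintype ι]

lemma diagRankOne_mulVec (x : ι → ℝ) :
    diagRankOne σ d u *ᵥ x = σ • (d * x) + ((1 - σ) * (u ⬝ᵥ x)) • u := by
  ext i
  simp [diagRankOne, add_mulVec, smul_mulVec, vecMulVec_mulVec, mulVec_diagonal]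
  ring

lemma dotProduct_diagRankOne_mulVec (x : ι → ℝ) :
    x ⬝ᵥ diagRankOne σ d u *ᵥ x = σ * ∑ i, d i * x i ^ 2 + (1 - σ) * (u ⬝ᵥ x) ^ 2 := by
  have hd : x ⬝ᵥ (d * x) = ∑ i, d i * x i ^ 2 :=
    Finset.sum_congr rfl fun i _ => by simp only [Pi.mul_apply]; ring
  rw [diagRankOne_mulVec, dotProduct_add, dotProduct_smul, dotProduct_smul, smul_eq_mul,
    smul_eq_mul, hd, dotProduct_comm x u]
  ring

lemma posSemidef_diagRankOne (hσ0 : 0 ≤ σ) (hσ1 : σ ≤ 1) (hd : ∀ i, 0 ≤ d i) :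
    (diagRankOne σ d u).PosSemidef :=
  (PosSemidef.diagonal fun i => mul_nonneg hσ0 (hd i)).add
    (by simpa using (posSemidef_vecMulVec_self_star u).smul (sub_nonneg.mpr hσ1))

end diagRankOne

section comparison

variable {ι : Type*} [Fintype ι] {σ : ℝ} {v d u : ι → ℝ}

lemma sq_sum_mul_lt_sum_mul_sq (hv : ∀ i, 0 < v i) (hv1 : ∑ i, v i = 1)
    (hdc : ∃ i j, d i ≠ d j) : (∑ i, v i * d i) ^ 2 < ∑ i, v i * d i ^ 2 := by
  obtain ⟨i, j, hij⟩ := hdc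
  simpa using (Even.strictConvexOn_pow even_two two_ne_zero).map_sum_lt
    (fun i _ => hv i) hv1 (fun i _ => Set.mem_univ (d i)) ⟨i, by simp, j, by simp, hij⟩

lemma sum_mul_sq_sub_sq_dotProduct (hv1 : ∑ i, v i = 1) (hd : ∀ i, d i ≠ 0)
    (hu : ∀ i, u i ^ 2 = v i * d i) (x : ι → ℝ) :
    ∑ i, d i * x i ^ 2 - (u ⬝ᵥ x) ^ 2 = ∑ i, (d i * x i - (u ⬝ᵥ x) * u i) ^ 2 / d i := by
  have hterm : ∀ i, (d i * x i - (u ⬝ᵥ x) * u i) ^ 2 / d i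
      = d i * x i ^ 2 - 2 * (u ⬝ᵥ x) * (u i * x i) + (u ⬝ᵥ x) ^ 2 * v i := fun i => by
    field_simp [hd i]
    linear_combination (u ⬝ᵥ x) ^ 2 * hu i
  simp only [hterm, Finset.sum_add_distrib, Finset.sum_sub_distrib, ← Finset.mul_sum, hv1]
  simp only [dotProduct]
  ring

lemma sq_dotProduct_le_sum_mul_sq (hv1 : ∑ i, v i = 1) (hd : ∀ i, 0 < d i)
    (hu : ∀ i, u i ^ 2 = v i * d i) (x : ι → ℝ) : (u ⬝ᵥ x) ^ 2 ≤ ∑ i, d i * x i ^ 2 := by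
  have := sum_mul_sq_sub_sq_dotProduct hv1 (fun i => (hd i).ne') hu x
  have : 0 ≤ ∑ i, (d i * x i - (u ⬝ᵥ x) * u i) ^ 2 / d i :=
    Finset.sum_nonneg fun i _ => div_nonneg (sq_nonneg _) (hd i).le
  linarith

lemma mul_eq_dotProduct_mul_of_sum_mul_sq_eq (hv1 : ∑ i, v i = 1) (hd : ∀ i, 0 < d i)
    (hu : ∀ i, u i ^ 2 = v i * d i) {x : ι → ℝ} (hx : ∑ i, d i * x i ^ 2 = (u ⬝ᵥ x) ^ 2)
    (i : ι) : d i * x i = (u ⬝ᵥ x) * u i := by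
  have hsum := sum_mul_sq_sub_sq_dotProduct hv1 (fun i => (hd i).ne') hu x
  rw [hx, sub_self, eq_comm, Finset.sum_eq_zero_iff_of_nonneg
    fun i _ => div_nonneg (sq_nonneg _) (hd i).le] at hsum
  have := hsum i (Finset.mem_univ i)
  rw [div_eq_zero_iff, or_iff_left (hd i).ne', sq_eq_zero_iff, sub_eq_zero] at this
  exact this

variable [DecidableEq ι]

lemma eq_of_diagRankOne_mulVec_eq_smul (hd : ∀ i, 0 < d i) (hu0 : ∀ i, u i ≠ 0)
    {x : ι → ℝ} (hx0 : x ≠ 0) {μ : ℝ} (hμ : diagRankOne σ d u *ᵥ x = μ • x)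
    (hcol : ∀ i, d i * x i = (u ⬝ᵥ x) * u i) (i : ι) : d i = μ := by
  have hμi : μ * x i = d i * x i := by
    have := congrFun hμ i
    simp only [diagRankOne_mulVec, Pi.add_apply, Pi.smul_apply, Pi.mul_apply,
      smul_eq_mul] at this
    linear_combination -this - (1 - σ) * hcol i
  have hxi : x i ≠ 0 := by
    intro hxi
    have hux : u ⬝ᵥ x = 0 := by
      simpa [hxi, hu0 i] using hcol i
    exact hx0 (funext fun j => by simpa [hux, (hd j).ne'] using hcol j)
  exact (mul_right_cancel₀ hxi hμi).symm

variable [Nonempty ι]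

lemma sum_mul_lt_maxEigenvalue_diagRankOne (hσ0 : 0 < σ) (hv : ∀ i, 0 < v i)
    (hv1 : ∑ i, v i = 1) (hd : ∀ i, 0 < d i) (hu : ∀ i, u i ^ 2 = v i * d i)
    (hdc : ∃ i j, d i ≠ d j) :
    ∑ i, v i * d i < (isHermitian_diagRankOne (σ := σ) (d := d) (u := u)).maxEigenvalue := by
  have hRayleigh := (isHermitian_diagRankOne (σ := σ) (d := d) (u := u)).dotProduct_mulVec_le_s18 u
  have huu : u ⬝ᵥ u = ∑ i, v i * d i := Finset.sum_congr rfl fun i _ => by rw [← sq, hu]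
  have hdu : ∑ i, d i * u i ^ 2 = ∑ i, v i * d i ^ 2 :=
    Finset.sum_congr rfl fun i _ => by rw [hu]; ring
  have hpos : 0 < ∑ i, v i * d i :=
    Finset.sum_pos (fun i _ => mul_pos (hv i) (hd i)) Finset.univ_nonempty
  rw [dotProduct_diagRankOne_mulVec, hdu, huu] at hRayleigh
  nlinarith [sq_sum_mul_lt_sum_mul_sq hv hv1 hdc]

theorem specRad_diagRankOne_sq_lt (hσ0 : 0 < σ) (hσ1 : σ < 1) (hv : ∀ i, 0 < v i)
    (hv1 : ∑ i, v i = 1) (hd : ∀ i, 0 < d i) (hu : ∀ i, u i ^ 2 = v i * d i)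
    (hdc : ∃ i j, d i ≠ d j) :
    specRad (diagRankOne (σ ^ 2) d u) < specRad (diagRankOne σ d u) := by
  have h₁ := isHermitian_diagRankOne (σ := σ) (d := d) (u := u)
  have h₂ := isHermitian_diagRankOne (σ := σ ^ 2) (d := d) (u := u)
  set c := ∑ i, v i * d i
  have hc_lt : c < h₁.maxEigenvalue := sum_mul_lt_maxEigenvalue_diagRankOne hσ0 hv hv1 hd hu hdc
  obtain ⟨x, hx1, hx⟩ := h₂.exists_unit_eigenvector_maxEigenvalue
  have hmax₂ : h₂.maxEigenvalue = σ ^ 2 * ∑ i, d i * x i ^ 2 + (1 - σ ^ 2) * (u ⬝ᵥ x) ^ 2 := by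
    rw [← dotProduct_diagRankOne_mulVec, hx, dotProduct_smul, hx1, smul_eq_mul, mul_one]
  have hmax₁ : σ * ∑ i, d i * x i ^ 2 + (1 - σ) * (u ⬝ᵥ x) ^ 2 ≤ h₁.maxEigenvalue := by
    simpa [dotProduct_diagRankOne_mulVec, hx1] using h₁.dotProduct_mulVec_le_s18 x
  have hcs : (u ⬝ᵥ x) ^ 2 ≤ c := by
    have hx1' : ∑ i, x i ^ 2 = 1 := by simpa [dotProduct, sq] using hx1
    have huu' : ∑ i, u i ^ 2 = c := Finset.sum_congr rfl fun i _ => hu i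
    have := Finset.sum_mul_sq_le_sq_mul_sq Finset.univ u x
    rwa [hx1', huu', mul_one] at this
  rw [h₁.specRad_eq_maxEigenvalue_of_posSemidef (posSemidef_diagRankOne hσ0.le hσ1.le
      fun i => (hd i).le),
    h₂.specRad_eq_maxEigenvalue_of_posSemidef (posSemidef_diagRankOne (sq_nonneg σ)
      (by nlinarith) fun i => (hd i).le)]
  calc h₂.maxEigenvalue
      = σ * (σ * ∑ i, d i * x i ^ 2 + (1 - σ) * (u ⬝ᵥ x) ^ 2) + (1 - σ) * (u ⬝ᵥ x) ^ 2 := by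
        rw [hmax₂]; ring
    _ ≤ σ * h₁.maxEigenvalue + (1 - σ) * c := by gcongr
    _ < h₁.maxEigenvalue := by nlinarith

theorem specRad_diagRankOne_lt_sq (hσ0 : σ < 0) (hσ1 : -1 ≤ σ) (hv1 : ∑ i, v i = 1)
    (hd : ∀ i, 0 < d i) (hu0 : ∀ i, 0 < u i) (hu : ∀ i, u i ^ 2 = v i * d i)
    (hP : ∀ i, 0 ≤ σ + (1 - σ) * v i) (hdc : ∃ i j, d i ≠ d j) :
    specRad (diagRankOne σ d u) < specRad (diagRankOne (σ ^ 2) d u) := by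
  have h₁ := isHermitian_diagRankOne (σ := σ) (d := d) (u := u)
  have h₂ := isHermitian_diagRankOne (σ := σ ^ 2) (d := d) (u := u)
  rw [h₁.specRad_eq_maxEigenvalue_of_nonneg (diagRankOne_nonneg (by linarith)
      (fun i => (hd i).le) (fun i => (hu0 i).le) hu hP),
    h₂.specRad_eq_maxEigenvalue_of_posSemidef (posSemidef_diagRankOne (sq_nonneg σ)
      (by nlinarith) fun i => (hd i).le)]
  obtain ⟨x, hx1, hx⟩ := h₁.exists_unit_eigenvector_maxEigenvalue
  have hmax₁ : h₁.maxEigenvalue = σ * ∑ i, d i * x i ^ 2 + (1 - σ) * (u ⬝ᵥ x) ^ 2 := by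
    rw [← dotProduct_diagRankOne_mulVec, hx, dotProduct_smul, hx1, smul_eq_mul, mul_one]
  have hmax₂ : σ ^ 2 * ∑ i, d i * x i ^ 2 + (1 - σ ^ 2) * (u ⬝ᵥ x) ^ 2 ≤ h₂.maxEigenvalue := by
    simpa [dotProduct_diagRankOne_mulVec, hx1] using h₂.dotProduct_mulVec_le_s18 x
  have hcs := sq_dotProduct_le_sum_mul_sq hv1 hd hu x
  have hσσ : 0 < σ ^ 2 - σ := by nlinarith
  -- `x M(σ²) x = λ₁ + (σ² - σ) (∑ dᵢ xᵢ² - (u ⬝ x)²)`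
  refine lt_of_le_of_ne (by nlinarith) fun heq => ?_
  have hcs_eq : ∑ i, d i * x i ^ 2 = (u ⬝ᵥ x) ^ 2 := by nlinarith
  have hconst := eq_of_diagRankOne_mulVec_eq_smul hd (fun i => (hu0 i).ne')
    (fun h => by simp [h] at hx1) hx (mul_eq_dotProduct_mul_of_sum_mul_sq_eq hv1 hd hu hcs_eq)
  obtain ⟨i, j, hij⟩ := hdc
  exact hij ((hconst i).trans (hconst j).symm)

end comparison

section idRankOne

variable {ι : Type*} [DecidableEq ι] {σ : ℝ} {v d : ι → ℝ}

/-- The paper's `P = (1 - α) I + α v eᵀ` with `σ = 1 - α`, so that `P² = idRankOne (σ ^ 2) v`. -/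
def idRankOne (σ : ℝ) (v : ι → ℝ) : Matrix ι ι ℝ :=
  σ • 1 + (1 - σ) • vecMulVec v 1

lemma one_sub_idRankOne_apply_self (α : ℝ) (i : ι) :
    1 - idRankOne (1 - α) v i i = α * (1 - v i) := by
  simp [idRankOne]
  ring

variable [Fintype ι]

lemma idRankOne_mul_self (hv1 : ∑ i, v i = 1) :
    idRankOne σ v * idRankOne σ v = idRankOne (σ ^ 2) v := by
  have hW : vecMulVec v 1 * vecMulVec v 1 = vecMulVec v (1 : ι → ℝ) := by
    rw [vecMulVec_mul_vecMulVec, one_dotProduct, hv1, one_smul]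
  simp only [idRankOne, add_mul, mul_add, smul_mul_smul, mul_one, one_mul, hW]
  module

lemma idRankOne_mul_diagonal_mul_diagonal {u : ι → ℝ} (hd : ∀ i, d i ≠ 0)
    (hu : ∀ i, u i ^ 2 = v i * d i) :
    idRankOne σ v * diagonal d * diagonal (u / d) = diagonal (u / d) * diagRankOne σ d u := by
  ext i j
  have hdi := hd i
  have hdj := hd j
  rcases eq_or_ne i j with rfl | hij
  · simp [idRankOne, diagRankOne, vecMulVec_apply]
    field_simp
    linear_combination (σ - 1) * u i * hu i
  · simp [idRankOne, diagRankOne, vecMulVec_apply, hij]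
    field_simp
    linear_combination (σ - 1) * u j * hu i

lemma specRad_idRankOne_mul_diagonal (hv : ∀ i, 0 < v i) (hd : ∀ i, 0 < d i) (σ : ℝ) :
    specRad (idRankOne σ v * diagonal d) =
      specRad (diagRankOne σ d fun i => √(v i * d i)) := by
  refine specRad_eq_of_mul_eq_mul (isUnit_diagonal.mpr ?_)
    (idRankOne_mul_diagonal_mul_diagonal (fun i => (hd i).ne')
      fun i => Real.sq_sqrt (mul_pos (hv i) (hd i)).le)
  exact Pi.isUnit_iff.mpr fun i =>
    (div_pos (Real.sqrt_pos.mpr (mul_pos (hv i) (hd i))) (hd i)).ne'.isUnit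

variable [Nonempty ι]

theorem specRad_idRankOne_sq_mul_diagonal_lt (hσ0 : 0 < σ) (hσ1 : σ < 1) (hv : ∀ i, 0 < v i)
    (hv1 : ∑ i, v i = 1) (hd : ∀ i, 0 < d i) (hdc : ∃ i j, d i ≠ d j) :
    specRad (idRankOne σ v * idRankOne σ v * diagonal d) <
      specRad (idRankOne σ v * diagonal d) := by
  rw [idRankOne_mul_self hv1, specRad_idRankOne_mul_diagonal hv hd,
    specRad_idRankOne_mul_diagonal hv hd]
  exact specRad_diagRankOne_sq_lt hσ0 hσ1 hv hv1 hd
    (fun i => Real.sq_sqrt (mul_pos (hv i) (hd i)).le) hdc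

theorem specRad_idRankOne_mul_diagonal_lt_sq (hσ0 : σ < 0) (hσ1 : -1 ≤ σ) (hv : ∀ i, 0 < v i)
    (hv1 : ∑ i, v i = 1) (hd : ∀ i, 0 < d i) (hP : ∀ i, 0 ≤ σ + (1 - σ) * v i)
    (hdc : ∃ i j, d i ≠ d j) :
    specRad (idRankOne σ v * diagonal d) <
      specRad (idRankOne σ v * idRankOne σ v * diagonal d) := by
  rw [idRankOne_mul_self hv1, specRad_idRankOne_mul_diagonal hv hd,
    specRad_idRankOne_mul_diagonal hv hd]
  exact specRad_diagRankOne_lt_sq hσ0 hσ1 hv1 hd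
    (fun i => Real.sqrt_pos.mpr (mul_pos (hv i) (hd i)))
    (fun i => Real.sq_sqrt (mul_pos (hv i) (hd i)).le) hP hdc

theorem specRad_idRankOne_trichotomy {α : ℝ} (hα0 : 0 < α) (hα2 : α ≤ 2)
    (hα : ∀ i, α * (1 - v i) ≤ 1) (hv : ∀ i, 0 < v i) (hv1 : ∑ i, v i = 1)
    (hd : ∀ i, 0 < d i) (hdc : ∃ i j, d i ≠ d j) :
    (α < 1 ↔ specRad (idRankOne (1 - α) v * idRankOne (1 - α) v * diagonal d) <
      specRad (idRankOne (1 - α) v * diagonal d)) ∧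
    (α = 1 ↔ specRad (idRankOne (1 - α) v * idRankOne (1 - α) v * diagonal d) =
      specRad (idRankOne (1 - α) v * diagonal d)) ∧
    (1 < α ↔ specRad (idRankOne (1 - α) v * diagonal d) <
      specRad (idRankOne (1 - α) v * idRankOne (1 - α) v * diagonal d)) :=
  iff_and_iff_and_iff_of_trichotomy
    (fun h => specRad_idRankOne_sq_mul_diagonal_lt (by linarith) (by linarith) hv hv1 hd hdc)
    (fun h => by rw [h, sub_self, idRankOne_mul_self hv1]; norm_num)
    (fun h => specRad_idRankOne_mul_diagonal_lt_sq (by linarith) (by linarith) hv hv1 hd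
      (fun i => by linarith [hα i]) hdc)

end idRankOne

theorem stmt_18_general {n : ℕ} (v : Fin n → ℝ)
    (hv : ∀ i, 0 < v i) (hv1 : ∑ i, v i = 1)
    (α : ℝ) (hα : 0 < α) (hα' : ∀ i, α * (1 - v i) ≤ 1)
    (P : Matrix (Fin n) (Fin n) ℝ)
    (hP : P = Matrix.of fun i j : Fin n =>
        (1 - α) * (if i = j then (1:ℝ) else 0) + α * v i)
    (d : Fin n → ℝ) (hd : ∀ i, 0 < d i)
    (hdns : ∀ c : ℝ, Matrix.diagonal d ≠ c • (1 : Matrix (Fin n) (Fin n) ℝ)) :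
    (specRad (P * P * Matrix.diagonal d) < specRad (P * Matrix.diagonal d) ↔
      1 + 1 / ((n : ℝ) - 1) < (n : ℝ) / ∑ i, (1 / (1 / (1 - P i i)))) ∧
    (specRad (P * P * Matrix.diagonal d) = specRad (P * Matrix.diagonal d) ↔
      (n : ℝ) / ∑ i, (1 / (1 / (1 - P i i))) = 1 + 1 / ((n : ℝ) - 1)) ∧
    (specRad (P * Matrix.diagonal d) < specRad (P * P * Matrix.diagonal d) ↔
      1 ≤ (n : ℝ) / ∑ i, (1 / (1 / (1 - P i i))) ∧
      (n : ℝ) / ∑ i, (1 / (1 / (1 - P i i))) < 1 + 1 / ((n : ℝ) - 1)) := by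
  have hdc := exists_ne_of_forall_diagonal_ne_smul_one hdns
  obtain ⟨i₀, j₀, hij₀⟩ := id hdc
  have : Nonempty (Fin n) := ⟨i₀⟩
  have hn : (2 : ℝ) ≤ n := by
    exact_mod_cast Fin.nontrivial_iff_two_le.mp ⟨i₀, j₀, fun h => hij₀ (congrArg d h)⟩
  have hn₁ : (0 : ℝ) < n - 1 := by linarith
  obtain rfl : P = idRankOne (1 - α) v := by
    rw [hP]; ext i j; simp [idRankOne, one_apply]
  have hsum : ∑ i, α * (1 - v i) = α * ((n : ℝ) - 1) := by
    rw [← Finset.mul_sum, Finset.sum_sub_distrib, hv1]; simp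
  have hαn : α * ((n : ℝ) - 1) ≤ n := by
    simpa [hsum] using Finset.sum_le_sum fun i (_ : i ∈ Finset.univ) => hα' i
  have hK : 0 < 1 + 1 / ((n : ℝ) - 1) := by positivity
  have hE : (n : ℝ) / (α * ((n : ℝ) - 1)) = (1 + 1 / ((n : ℝ) - 1)) / α := by
    field_simp; ring
  have hE₁ : 1 ≤ (1 + 1 / ((n : ℝ) - 1)) / α := by
    rwa [← hE, one_le_div (mul_pos hα hn₁)]
  obtain ⟨hlt, heq, hgt⟩ :=
    specRad_idRankOne_trichotomy hα (by nlinarith) hα' hv hv1 hd hdc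
  simp_rw [one_div_one_div, one_sub_idRankOne_apply_self, hsum, hE]
  rw [← hlt, ← heq, ← hgt, lt_div_iff₀ hα, mul_lt_iff_lt_one_right hK, div_eq_iff hα.ne',
    left_eq_mul₀ hK.ne', div_lt_iff₀ hα, lt_mul_iff_one_lt_right hK, and_iff_right hE₁]
  exact ⟨.rfl, .rfl, .rfl⟩

theorem stmt_18 {n : ℕ} (hn : 0 < n) (v : Fin n → ℝ)
    (hv : ∀ i, 0 < v i) (hv1 : ∑ i, v i = 1)
    (α : ℝ) (hα : 0 < α) (hα' : ∀ i, α * (1 - v i) ≤ 1)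
    (P : Matrix (Fin n) (Fin n) ℝ)
    (hP : P = Matrix.of fun i j : Fin n =>
        (1 - α) * (if i = j then (1:ℝ) else 0) + α * v i)
    (d : Fin n → ℝ) (hd : ∀ i, 0 < d i)
    (hdns : ∀ c : ℝ, Matrix.diagonal d ≠ c • (1 : Matrix (Fin n) (Fin n) ℝ)) :
    (specRad (P * P * Matrix.diagonal d) < specRad (P * Matrix.diagonal d) ↔
      1 + 1 / ((n : ℝ) - 1) < (n : ℝ) / ∑ i, (1 / (1 / (1 - P i i)))) ∧
    (specRad (P * P * Matrix.diagonal d) = specRad (P * Matrix.diagonal d) ↔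
      (n : ℝ) / ∑ i, (1 / (1 / (1 - P i i))) = 1 + 1 / ((n : ℝ) - 1)) ∧
    (specRad (P * Matrix.diagonal d) < specRad (P * P * Matrix.diagonal d) ↔
      1 ≤ (n : ℝ) / ∑ i, (1 / (1 / (1 - P i i))) ∧
      (n : ℝ) / ∑ i, (1 / (1 / (1 - P i i))) < 1 + 1 / ((n : ℝ) - 1)) :=
  stmt_18_general v hv hv1 α hα hα' P hP d hd hdns
end
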